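/- Syntactical reference is preserved under substitution: if φ ≺ ψ and σ is a substitution, then φ[σ] ≺ ψ[σ]. -/
import Mathlib


namespace EJ

/-- Justification terms Tm(C): variables, constants, application and sum. -/
inductive Tm : Type
  | var : ℕ → Tm
  | const : ℕ → Tm
  | app : Tm → Tm → Tm
  | plus : Tm → Tm → Tm
  deriving DecidableEq

/-- Formulas Fm(C,D) of ∈_J-Logic. -/
inductive Fm : Type
  | pvar : ℕ → Fm
  | pconst : ℕ → Fm
  | imp : Fm → Fm → Fm
  | neg : Fm → Fm
  | ideq : Fm → Fm → Fm            -- φ ≡ ψ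
  | ref : Fm → Fm → Fm             -- φ < ψ
  | teq : Tm → Tm → Fm             -- s ≡ t
  | tle : Tm → Tm → Fm             -- s ≤ t
  | isTrue : Fm → Fm               -- φ : true
  | isFalse : Fm → Fm              -- φ : false
  | box : Fm → Fm                  -- □φ
  | just : Fm → Tm → Fm            -- φ : t
  | fAll : ℕ → Fm → Fm             -- ∀x.φ
  | jAll : ℕ → Fm → Fm             -- ⋀u.φ
  deriving DecidableEq

/-- variables of a term -/
def Tm.vars : Tm → Finset ℕ
  | .var u => {u}
  | .const _ => ∅
  | .app s t => s.vars ∪ t.vars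
  | .plus s t => s.vars ∪ t.vars

/-- constants of a term -/
def Tm.consts : Tm → Finset ℕ
  | .var _ => ∅
  | .const c => {c}
  | .app s t => s.consts ∪ t.consts
  | .plus s t => s.consts ∪ t.consts

/-- free propositional variables -/
def Fm.fvarP : Fm → Finset ℕ
  | .pvar x => {x}
  | .pconst _ => ∅
  | .imp φ ψ => φ.fvarP ∪ ψ.fvarP
  | .neg φ => φ.fvarP
  | .ideq φ ψ => φ.fvarP ∪ ψ.fvarP
  | .ref φ ψ => φ.fvarP ∪ ψ.fvarP
  | .teq _ _ => ∅
  | .tle _ _ => ∅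
  | .isTrue φ => φ.fvarP
  | .isFalse φ => φ.fvarP
  | .box φ => φ.fvarP
  | .just φ _ => φ.fvarP
  | .fAll x φ => φ.fvarP.erase x
  | .jAll _ φ => φ.fvarP

/-- free justification variables -/
def Fm.fvarJ : Fm → Finset ℕ
  | .pvar _ => ∅
  | .pconst _ => ∅
  | .imp φ ψ => φ.fvarJ ∪ ψ.fvarJ
  | .neg φ => φ.fvarJ
  | .ideq φ ψ => φ.fvarJ ∪ ψ.fvarJ
  | .ref φ ψ => φ.fvarJ ∪ ψ.fvarJ
  | .teq s t => s.vars ∪ t.vars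
  | .tle s t => s.vars ∪ t.vars
  | .isTrue φ => φ.fvarJ
  | .isFalse φ => φ.fvarJ
  | .box φ => φ.fvarJ
  | .just φ t => φ.fvarJ ∪ t.vars
  | .fAll _ φ => φ.fvarJ
  | .jAll u φ => φ.fvarJ.erase u

/-- propositional constants occurring in a formula -/
def Fm.pconsts : Fm → Finset ℕ
  | .pvar _ => ∅
  | .pconst d => {d}
  | .imp φ ψ => φ.pconsts ∪ ψ.pconsts
  | .neg φ => φ.pconsts
  | .ideq φ ψ => φ.pconsts ∪ ψ.pconsts
  | .ref φ ψ => φ.pconsts ∪ ψ.pconsts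
  | .teq _ _ => ∅
  | .tle _ _ => ∅
  | .isTrue φ => φ.pconsts
  | .isFalse φ => φ.pconsts
  | .box φ => φ.pconsts
  | .just φ _ => φ.pconsts
  | .fAll _ φ => φ.pconsts
  | .jAll _ φ => φ.pconsts

/-- justification constants occurring in a formula -/
def Fm.jconsts : Fm → Finset ℕ
  | .pvar _ => ∅
  | .pconst _ => ∅
  | .imp φ ψ => φ.jconsts ∪ ψ.jconsts
  | .neg φ => φ.jconsts
  | .ideq φ ψ => φ.jconsts ∪ ψ.jconsts
  | .ref φ ψ => φ.jconsts ∪ ψ.jconsts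
  | .teq s t => s.consts ∪ t.consts
  | .tle s t => s.consts ∪ t.consts
  | .isTrue φ => φ.jconsts
  | .isFalse φ => φ.jconsts
  | .box φ => φ.jconsts
  | .just φ t => φ.jconsts ∪ t.consts
  | .fAll _ φ => φ.jconsts
  | .jAll _ φ => φ.jconsts

/-- all propositional variables (free or bound) -/
def Fm.varP : Fm → Finset ℕ
  | .pvar x => {x}
  | .pconst _ => ∅
  | .imp φ ψ => φ.varP ∪ ψ.varP
  | .neg φ => φ.varP
  | .ideq φ ψ => φ.varP ∪ ψ.varP
  | .ref φ ψ => φ.varP ∪ ψ.varP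
  | .teq _ _ => ∅
  | .tle _ _ => ∅
  | .isTrue φ => φ.varP
  | .isFalse φ => φ.varP
  | .box φ => φ.varP
  | .just φ _ => φ.varP
  | .fAll x φ => insert x φ.varP
  | .jAll _ φ => φ.varP

/-- all justification variables (free or bound) -/
def Fm.varJ : Fm → Finset ℕ
  | .pvar _ => ∅
  | .pconst _ => ∅
  | .imp φ ψ => φ.varJ ∪ ψ.varJ
  | .neg φ => φ.varJ
  | .ideq φ ψ => φ.varJ ∪ ψ.varJ
  | .ref φ ψ => φ.varJ ∪ ψ.varJ
  | .teq s t => s.vars ∪ t.vars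
  | .tle s t => s.vars ∪ t.vars
  | .isTrue φ => φ.varJ
  | .isFalse φ => φ.varJ
  | .box φ => φ.varJ
  | .just φ t => φ.varJ ∪ t.vars
  | .fAll _ φ => φ.varJ
  | .jAll u φ => insert u φ.varJ

/-- A substitution: maps propositional variables/constants to formulas and
justification variables/constants to terms. -/
structure Subst where
  pv : ℕ → Fm
  jv : ℕ → Tm
  pc : ℕ → Fm
  jc : ℕ → Tm

/-- the identity substitution ε -/
def Subst.id : Subst := ⟨Fm.pvar, Tm.var, Fm.pconst, Tm.const⟩

def Subst.updP (σ : Subst) (x : ℕ) (e : Fm) : Subst :=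
  { σ with pv := Function.update σ.pv x e }

def Subst.updJ (σ : Subst) (u : ℕ) (t : Tm) : Subst :=
  { σ with jv := Function.update σ.jv u t }

def Subst.updPC (σ : Subst) (d : ℕ) (e : Fm) : Subst :=
  { σ with pc := Function.update σ.pc d e }

def Subst.updJC (σ : Subst) (c : ℕ) (t : Tm) : Subst :=
  { σ with jc := Function.update σ.jc c t }

/-- a substitution restricted to variables (identity on constants) -/
def Subst.IdOnConsts (σ : Subst) : Prop := σ.pc = Fm.pconst ∧ σ.jc = Tm.const

/-- substitution applied to a term -/
def Tm.subst : Tm → Subst → Tm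
  | .var u, σ => σ.jv u
  | .const c, σ => σ.jc c
  | .app s t, σ => .app (s.subst σ) (t.subst σ)
  | .plus s t, σ => .plus (s.subst σ) (t.subst σ)

/-- the propositional variable forced by σ w.r.t. a quantified formula:
the least variable greater than all free propositional variables of the images
under σ of the free symbols of the formula -/
def pForced (σ : Subst) (φ : Fm) : ℕ :=
  ((φ.fvarP.biUnion fun w => (σ.pv w).fvarP) ∪
   (φ.pconsts.biUnion fun w => (σ.pc w).fvarP)).sup Nat.succ

/-- the justification variable forced by σ w.r.t. a quantified formula -/
def jForced (σ : Subst) (φ : Fm) : ℕ :=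
  ((φ.fvarP.biUnion fun w => (σ.pv w).fvarJ) ∪
   (φ.pconsts.biUnion fun w => (σ.pc w).fvarJ) ∪
   (φ.fvarJ.biUnion fun w => (σ.jv w).vars) ∪
   (φ.jconsts.biUnion fun w => (σ.jc w).vars)).sup Nat.succ

/-- capture-avoiding substitution on formulas, renaming bound variables
canonically to the forced fresh variable -/
def Fm.subst : Fm → Subst → Fm
  | .pvar x, σ => σ.pv x
  | .pconst d, σ => σ.pc d
  | .imp φ ψ, σ => .imp (φ.subst σ) (ψ.subst σ)
  | .neg φ, σ => .neg (φ.subst σ)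
  | .ideq φ ψ, σ => .ideq (φ.subst σ) (ψ.subst σ)
  | .ref φ ψ, σ => .ref (φ.subst σ) (ψ.subst σ)
  | .teq s t, σ => .teq (s.subst σ) (t.subst σ)
  | .tle s t, σ => .tle (s.subst σ) (t.subst σ)
  | .isTrue φ, σ => .isTrue (φ.subst σ)
  | .isFalse φ, σ => .isFalse (φ.subst σ)
  | .box φ, σ => .box (φ.subst σ)
  | .just φ t, σ => .just (φ.subst σ) (t.subst σ)
  | .fAll x φ, σ =>
      let y := pForced σ (.fAll x φ)
      .fAll y (φ.subst (σ.updP x (.pvar y)))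
  | .jAll u φ, σ =>
      let v := jForced σ (.jAll u φ)
      .jAll v (φ.subst (σ.updJ u (.var v)))

/-- single-point substitution [x := ψ] for a propositional variable -/
def Fm.subst1P (φ : Fm) (x : ℕ) (ψ : Fm) : Fm := φ.subst (Subst.id.updP x ψ)

/-- single-point substitution [u := t] for a justification variable -/
def Fm.subst1J (φ : Fm) (u : ℕ) (t : Tm) : Fm := φ.subst (Subst.id.updJ u t)

/-- composition of substitutions: (σ ∘ τ)(x) = σ(x)[τ] -/
def Subst.comp (σ τ : Subst) : Subst :=
  ⟨fun x => (σ.pv x).subst τ, fun u => (σ.jv u).subst τ,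
   fun d => (σ.pc d).subst τ, fun c => (σ.jc c).subst τ⟩

/-- alpha-congruence: the smallest equivalence relation compatible with all
connectives and identifying formulas differing only in bound variables -/
inductive Alpha : Fm → Fm → Prop
  | refl (φ) : Alpha φ φ
  | symm : Alpha φ ψ → Alpha ψ φ
  | trans : Alpha φ ψ → Alpha ψ χ → Alpha φ χ
  | imp : Alpha φ₁ ψ₁ → Alpha φ₂ ψ₂ → Alpha (.imp φ₁ φ₂) (.imp ψ₁ ψ₂)
  | ideq : Alpha φ₁ ψ₁ → Alpha φ₂ ψ₂ → Alpha (.ideq φ₁ φ₂) (.ideq ψ₁ ψ₂)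
  | ref : Alpha φ₁ ψ₁ → Alpha φ₂ ψ₂ → Alpha (.ref φ₁ φ₂) (.ref ψ₁ ψ₂)
  | neg : Alpha φ ψ → Alpha (.neg φ) (.neg ψ)
  | isTrue : Alpha φ ψ → Alpha (.isTrue φ) (.isTrue ψ)
  | isFalse : Alpha φ ψ → Alpha (.isFalse φ) (.isFalse ψ)
  | box : Alpha φ ψ → Alpha (.box φ) (.box ψ)
  | just (t) : Alpha φ ψ → Alpha (.just φ t) (.just ψ t)
  | jAll : Alpha φ (ψ.subst1J v (.var u)) → (u ≠ v → u ∉ ψ.fvarJ) →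
      Alpha (.jAll u φ) (.jAll v ψ)
  | fAll : Alpha φ (ψ.subst1P y (.pvar x)) → (x ≠ y → x ∉ ψ.fvarP) →
      Alpha (.fAll x φ) (.fAll y ψ)

/-- syntactical reference φ ≺ ψ -/
def Sref (φ ψ : Fm) : Prop :=
  ∃ (x : ℕ) (ψ' : Fm), ψ' ≠ .pvar x ∧ x ∈ ψ'.fvarP ∧ Alpha (ψ'.subst1P x φ) ψ

/-! ## derived connectives -/

def Fm.and (φ ψ : Fm) : Fm := .neg (.imp φ (.neg ψ))
def Fm.iff (φ ψ : Fm) : Fm := (Fm.imp φ ψ).and (Fm.imp ψ φ)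
def Fm.jEx (u : ℕ) (φ : Fm) : Fm := .neg (.jAll u (.neg φ))
def Fm.fEx (x : ℕ) (φ : Fm) : Fm := .neg (.fAll x (.neg φ))

/-- conjunction of a list of formulas -/
def bigAnd : List Fm → Fm
  | [] => .imp (.pvar 0) (.pvar 0)
  | [φ] => φ
  | φ :: ψ :: rest => Fm.and φ (bigAnd (ψ :: rest))

/-- the formula σ ≡_φ σ' : conjunction of σ(x) ≡ σ'(x) over the free variables
of φ (in the order of the underlying well-orderings) -/
def eqOnF (σ σ' : Subst) (φ : Fm) : Fm :=
  bigAnd (((φ.fvarP.sort (· ≤ ·)).map fun x => Fm.ideq (σ.pv x) (σ'.pv x)) ++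
          ((φ.fvarJ.sort (· ≤ ·)).map fun u => Fm.teq (σ.jv u) (σ'.jv u)))

/-- the formula σ ≡_t σ' for a term t -/
def eqOnT (σ σ' : Subst) (t : Tm) : Fm :=
  bigAnd ((t.vars.sort (· ≤ ·)).map fun u => Fm.teq (σ.jv u) (σ'.jv u))

/-! ## the Hilbert system Ax -/

/-- boolean evaluation treating formulas other than →, ¬ as atoms -/
def Fm.evalB (v : Fm → Bool) : Fm → Bool
  | .imp φ ψ => !(φ.evalB v) || ψ.evalB v
  | .neg φ => !(φ.evalB v)
  | φ => v φ

/-- propositional tautology (a sufficient set of tautologies) -/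
def Taut (φ : Fm) : Prop := ∀ v : Fm → Bool, φ.evalB v = true

/-- the axiom system Ax of ∈_J-Logic (Definition 3.1) -/
inductive Ax : Fm → Prop
  | taut : Taut φ → Ax φ
  | tarski (φ) : Ax ((Fm.isTrue φ).iff φ)
  | falsity (φ) : Ax ((Fm.isFalse φ).iff (.neg φ))
  | appl (φ ψ s t) :
      Ax (.imp (.just (.imp φ ψ) s) (.imp (.just φ t) (.just ψ (.app s t))))
  | weak1 (φ s t) : Ax (.imp (.just φ s) (.just φ (.plus s t)))
  | weak2 (φ s t) : Ax (.imp (.just φ t) (.just φ (.plus s t)))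
  | necJust (φ u) : u ∉ φ.fvarJ →
      Ax ((Fm.box φ).iff (Fm.jEx u (.just φ (.var u))))
  | boxT (φ) : Ax (.imp (.box φ) φ)
  | refAx : Sref φ ψ → Ax (.ref φ ψ)
  | refTrans (φ ψ χ) : Ax (.imp (.ref φ ψ) (.imp (.ref ψ χ) (.ref φ χ)))
  | alphaAx : Alpha φ ψ → Ax (.ideq φ ψ)
  | eqImp (φ ψ) : Ax (.imp (.ideq φ ψ) (.imp φ ψ))
  | substP (σ σ' φ) : Ax (.imp (eqOnF σ σ' φ) (.ideq (φ.subst σ) (φ.subst σ')))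
  | jExInst (φ u t) : Ax (.imp (φ.subst1J u t) (Fm.jEx u φ))
  | jAllInst (φ u t) : Ax (.imp (.jAll u φ) (φ.subst1J u t))
  | jDistrib (φ ψ u) :
      Ax (.imp (.jAll u (.imp ψ φ)) (.imp (.jAll u ψ) (.jAll u φ)))
  | jVac (φ ψ u) : u ∉ ψ.fvarJ →
      Ax (.imp (.jAll u (.imp ψ φ)) (.imp ψ (.jAll u φ)))
  | pExInst (φ x ψ) : Ax (.imp (φ.subst1P x ψ) (Fm.fEx x φ))
  | pAllInst (φ x ψ) : Ax (.imp (.fAll x φ) (φ.subst1P x ψ))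
  | pDistrib (φ ψ x) :
      Ax (.imp (.fAll x (.imp ψ φ)) (.imp (.fAll x ψ) (.fAll x φ)))
  | pVac (φ ψ x) : x ∉ ψ.fvarP →
      Ax (.imp (.fAll x (.imp ψ φ)) (.imp ψ (.fAll x φ)))
  | leDef (s t x) :
      Ax ((Fm.tle s t).iff
        (.fAll x (.imp (.just (.pvar x) s) (.just (.pvar x) t))))
  | ext (s t) : Ax ((Fm.teq s t).iff ((Fm.tle s t).and (Fm.tle t s)))
  | substT (σ σ' t) : Ax (.imp (eqOnT σ σ' t) (.teq (t.subst σ) (t.subst σ')))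
  | genJ : Ax φ → u ∈ φ.fvarJ → Ax (.jAll u φ)
  | genP : Ax φ → x ∈ φ.fvarP → Ax (.fAll x φ)

/-- derivability from Φ in the Hilbert system Ax with Modus Ponens -/
inductive Deriv (Φ : Set Fm) : Fm → Prop
  | hyp : φ ∈ Φ → Deriv Φ φ
  | ax : Ax φ → Deriv Φ φ
  | mp : Deriv Φ (.imp φ ψ) → Deriv Φ φ → Deriv Φ ψ

def Consistent (Φ : Set Fm) : Prop := ¬ ∃ φ, Deriv Φ φ ∧ Deriv Φ (.neg φ)

def MaxConsistent (Φ : Set Fm) : Prop :=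
  Consistent Φ ∧ ∀ ψ, ψ ∉ Φ → ¬ Consistent (insert ψ Φ)

/-- Henkin set (Definition 4.4) -/
def Henkin (Φ : Set Fm) : Prop :=
  MaxConsistent Φ ∧
  (∀ u φ, Deriv Φ (.jAll u φ) ↔ ∀ c : ℕ, Deriv Φ (φ.subst1J u (.const c))) ∧
  (∀ x φ, Deriv Φ (.fAll x φ) ↔ ∀ d : ℕ, Deriv Φ (φ.subst1P x (.pconst d)))

/-! ## semantics -/

/-- an assignment of propositions to propositional variables and indexes to
justification variables -/
structure Assign (P I : Type) where
  gp : ℕ → P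
  gj : ℕ → I

def Assign.updP {P I : Type} (γ : Assign P I) (x : ℕ) (m : P) : Assign P I :=
  ⟨Function.update γ.gp x m, γ.gj⟩

def Assign.updJ {P I : Type} (γ : Assign P I) (u : ℕ) (l : I) : Assign P I :=
  ⟨γ.gp, Function.update γ.gj u l⟩

/-- a model of ∈_J-Logic (Definition 4.1) -/
structure JModel where
  P : Type                                  -- the propositional universe M
  I : Type                                  -- the set L of indexes
  TRUE : Set P
  FALSE : Set P
  NEC : Set P
  REASON : I → Set P
  ref : P → P → Prop                        -- the reference relation <^M
  plusI : I → I → I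
  dotI : I → I → I
  leI : I → I → Prop
  G : Fm → Assign P I → P                   -- Gamma-function on formulas
  GT : Tm → Assign P I → I                  -- Gamma-function on terms
  cover : TRUE ∪ FALSE = Set.univ
  disj : TRUE ∩ FALSE = ∅
  nec_sub : NEC ⊆ TRUE
  nec_union : NEC = ⋃ l, REASON l
  le_iso : ∀ l k, leI l k ↔ REASON l ⊆ REASON k
  reason_inj : Function.Injective REASON
  ref_trans : Transitive ref
  -- structure conditions
  ep : ∀ x γ, G (.pvar x) γ = γ.gp x
  epT : ∀ u γ, GT (.var u) γ = γ.gj u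
  cp : ∀ φ γ γ', (∀ x ∈ Fm.fvarP φ, γ.gp x = Assign.gp γ' x) →
      (∀ u ∈ Fm.fvarJ φ, γ.gj u = Assign.gj γ' u) → G φ γ = G φ γ'
  cpT : ∀ t γ γ', (∀ u ∈ Tm.vars t, γ.gj u = Assign.gj γ' u) → GT t γ = GT t γ'
  sp : ∀ φ (σ : Subst) γ, σ.IdOnConsts →
      G (φ.subst σ) γ = G φ ⟨fun x => G (σ.pv x) γ, fun u => GT (σ.jv u) γ⟩
  spT : ∀ t (σ : Subst) γ, σ.IdOnConsts →
      GT (t.subst σ) γ = GT t ⟨fun x => G (σ.pv x) γ, fun u => GT (σ.jv u) γ⟩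
  rp : ∀ φ ψ γ, Sref φ ψ → ref (G φ γ) (G ψ γ)
  hp_plus : ∀ s t γ, GT (.plus s t) γ = plusI (GT s γ) (GT t γ)
  hp_dot : ∀ s t γ, GT (.app s t) γ = dotI (GT s γ) (GT t γ)
  -- truth conditions
  t_imp : ∀ φ ψ γ, (G (.imp φ ψ) γ ∈ TRUE ↔ (G φ γ ∈ FALSE ∨ G ψ γ ∈ TRUE))
  t_neg : ∀ φ γ, (G (.neg φ) γ ∈ TRUE ↔ G φ γ ∉ TRUE)
  t_true : ∀ φ γ, (G (.isTrue φ) γ ∈ TRUE ↔ G φ γ ∈ TRUE)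
  t_false : ∀ φ γ, (G (.isFalse φ) γ ∈ TRUE ↔ G φ γ ∈ FALSE)
  t_ideq : ∀ φ ψ γ, (G (.ideq φ ψ) γ ∈ TRUE ↔ G φ γ = G ψ γ)
  t_ref : ∀ φ ψ γ, (G (.ref φ ψ) γ ∈ TRUE ↔ ref (G φ γ) (G ψ γ))
  t_teq : ∀ s t γ, (G (.teq s t) γ ∈ TRUE ↔ GT s γ = GT t γ)
  t_tle : ∀ s t γ, (G (.tle s t) γ ∈ TRUE ↔ leI (GT s γ) (GT t γ))
  t_box : ∀ φ γ, (G (.box φ) γ ∈ TRUE ↔ G φ γ ∈ NEC)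
  t_just : ∀ φ t γ, (G (.just φ t) γ ∈ TRUE ↔ G φ γ ∈ REASON (GT t γ))
  t_app : ∀ φ ψ s t γ, G (.imp φ ψ) γ ∈ REASON (GT s γ) →
      G φ γ ∈ REASON (GT t γ) → G ψ γ ∈ REASON (GT (.app s t) γ)
  t_plusJ : ∀ φ s t γ, G φ γ ∈ REASON (GT s γ) ∪ REASON (GT t γ) →
      G φ γ ∈ REASON (GT (.plus s t) γ)
  t_jAll : ∀ u φ γ, (G (.jAll u φ) γ ∈ TRUE ↔ ∀ l, G φ (γ.updJ u l) ∈ TRUE)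
  t_fAll : ∀ x φ γ, (G (.fAll x φ) γ ∈ TRUE ↔ ∀ m, G φ (γ.updP x m) ∈ TRUE)

/-- satisfaction -/
def JModel.Sat (M : JModel) (γ : Assign M.P M.I) (φ : Fm) : Prop :=
  M.G φ γ ∈ M.TRUE

/-- logical consequence over all models -/
def Conseq (Φ : Set Fm) (φ : Fm) : Prop :=
  ∀ (M : JModel) (γ : Assign M.P M.I), (∀ ψ ∈ Φ, M.Sat γ ψ) → M.Sat γ φ

/-! ## S4 extensions -/

/-- the axioms of Ax + (4) -/
inductive Ax4 : Fm → Prop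
  | base : Ax φ → Ax4 φ
  | four (φ) : Ax4 (.imp (.box φ) (.box (.box φ)))

/-- derivability in Ax + (4) + (AxNec): MP plus Axiom Necessitation -/
inductive Deriv4 (Φ : Set Fm) : Fm → Prop
  | hyp : φ ∈ Φ → Deriv4 Φ φ
  | ax : Ax4 φ → Deriv4 Φ φ
  | axnec : Ax4 φ → Deriv4 Φ (.box φ)
  | mp : Deriv4 Φ (.imp φ ψ) → Deriv4 Φ φ → Deriv4 Φ ψ

/-- truth condition (4) -/
def Cond4 (M : JModel) : Prop :=
  ∀ φ γ, M.Sat γ (.box φ) → M.Sat γ (.box (.box φ))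

/-- truth condition (AxNec) -/
def CondAxNec (M : JModel) : Prop :=
  ∀ φ γ, Ax4 φ → M.Sat γ (.box φ)

/-! ## basic modal language and S4 -/

inductive MFm : Type
  | var : ℕ → MFm
  | imp : MFm → MFm → MFm
  | neg : MFm → MFm
  | box : MFm → MFm
  deriving DecidableEq

def MFm.toFm : MFm → Fm
  | .var x => .pvar x
  | .imp a b => .imp a.toFm b.toFm
  | .neg a => .neg a.toFm
  | .box a => .box a.toFm

def MFm.evalB (v : MFm → Bool) : MFm → Bool
  | .imp a b => !(a.evalB v) || b.evalB v
  | .neg a => !(a.evalB v)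
  | a => v a

def MTaut (a : MFm) : Prop := ∀ v, a.evalB v = true

/-- the modal logic S4 -/
inductive S4 : MFm → Prop
  | taut : MTaut a → S4 a
  | axK (a b) : S4 (.imp (.box (.imp a b)) (.imp (.box a) (.box b)))
  | axT (a) : S4 (.imp (.box a) a)
  | ax4 (a) : S4 (.imp (.box a) (.box (.box a)))
  | mp : S4 (.imp a b) → S4 a → S4 b
  | nec : S4 a → S4 (.box a)

/-- an S4 frame: reflexive and transitive accessibility -/
structure S4Frame where
  W : Type
  R : W → W → Prop
  refl : Reflexive R
  trans : Transitive R

/-- Kripke satisfaction -/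
def KSat (F : S4Frame) (g : F.W → ℕ → Prop) : F.W → MFm → Prop
  | w, .var x => g w x
  | w, .imp a b => KSat F g w a → KSat F g w b
  | w, .neg a => ¬ KSat F g w a
  | w, .box a => ∀ w', F.R w w' → KSat F g w' a


end EJ

set_option linter.dupNamespace false
set_option maxHeartbeats 1000000

namespace EJ

@[simp] lemma Subst.updP_pv (σ : Subst) (x e) : (σ.updP x e).pv = Function.update σ.pv x e := rfl
@[simp] lemma Subst.updP_jv (σ : Subst) (x e) : (σ.updP x e).jv = σ.jv := rfl
@[simp] lemma Subst.updP_pc (σ : Subst) (x e) : (σ.updP x e).pc = σ.pc := rfl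
@[simp] lemma Subst.updP_jc (σ : Subst) (x e) : (σ.updP x e).jc = σ.jc := rfl
@[simp] lemma Subst.updJ_pv (σ : Subst) (u t) : (σ.updJ u t).pv = σ.pv := rfl
@[simp] lemma Subst.updJ_jv (σ : Subst) (u t) : (σ.updJ u t).jv = Function.update σ.jv u t := rfl
@[simp] lemma Subst.updJ_pc (σ : Subst) (u t) : (σ.updJ u t).pc = σ.pc := rfl
@[simp] lemma Subst.updJ_jc (σ : Subst) (u t) : (σ.updJ u t).jc = σ.jc := rfl
@[simp] lemma Subst.comp_pv (σ τ : Subst) (x) : (σ.comp τ).pv x = (σ.pv x).subst τ := rfl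
@[simp] lemma Subst.comp_jv (σ τ : Subst) (u) : (σ.comp τ).jv u = (σ.jv u).subst τ := rfl
@[simp] lemma Subst.comp_pc (σ τ : Subst) (d) : (σ.comp τ).pc d = (σ.pc d).subst τ := rfl
@[simp] lemma Subst.comp_jc (σ τ : Subst) (c) : (σ.comp τ).jc c = (σ.jc c).subst τ := rfl
@[simp] lemma Subst.id_pv : Subst.id.pv = Fm.pvar := rfl
@[simp] lemma Subst.id_jv : Subst.id.jv = Tm.var := rfl
@[simp] lemma Subst.id_pc : Subst.id.pc = Fm.pconst := rfl
@[simp] lemma Subst.id_jc : Subst.id.jc = Tm.const := rfl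

lemma Tm.subst_congr {t : Tm} {σ σ' : Subst}
    (hv : ∀ u ∈ t.vars, σ.jv u = σ'.jv u) (hc : ∀ c ∈ t.consts, σ.jc c = σ'.jc c) :
    t.subst σ = t.subst σ' := by
  induction t with
  | var u => exact hv u (by simp [Tm.vars])
  | const c => exact hc c (by simp [Tm.consts])
  | app s t ihs iht =>
      simp only [Tm.subst]
      rw [ihs (fun u hu => hv u (by simp [Tm.vars, hu])) (fun c hc' => hc c (by simp [Tm.consts, hc'])),
          iht (fun u hu => hv u (by simp [Tm.vars, hu])) (fun c hc' => hc c (by simp [Tm.consts, hc']))]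
  | plus s t ihs iht =>
      simp only [Tm.subst]
      rw [ihs (fun u hu => hv u (by simp [Tm.vars, hu])) (fun c hc' => hc c (by simp [Tm.consts, hc'])),
          iht (fun u hu => hv u (by simp [Tm.vars, hu])) (fun c hc' => hc c (by simp [Tm.consts, hc']))]

lemma Tm.subst_id' {t : Tm} {σ : Subst}
    (hv : ∀ u ∈ t.vars, σ.jv u = .var u) (hc : ∀ c ∈ t.consts, σ.jc c = .const c) :
    t.subst σ = t := by
  have h : t.subst σ = t.subst Subst.id := Tm.subst_congr (by simpa using hv) (by simpa using hc)
  rw [h]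
  induction t with
  | var u => rfl
  | const c => rfl
  | app s t ihs iht => simp_all [Tm.subst, Tm.vars, Tm.consts]
  | plus s t ihs iht => simp_all [Tm.subst, Tm.vars, Tm.consts]

@[simp] lemma Tm.subst_updP (t : Tm) (σ : Subst) (x e) : t.subst (σ.updP x e) = t.subst σ :=
  Tm.subst_congr (by simp) (by simp)

lemma Tm.subst_comp (t : Tm) (σ τ : Subst) : (t.subst σ).subst τ = t.subst (σ.comp τ) := by
  induction t with
  | var u => rfl
  | const c => rfl
  | app s t ihs iht => simp [Tm.subst, ihs, iht]
  | plus s t ihs iht => simp [Tm.subst, ihs, iht]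

lemma Tm.vars_subst (t : Tm) (σ : Subst) :
    (t.subst σ).vars = t.vars.biUnion (fun u => (σ.jv u).vars) ∪ t.consts.biUnion (fun c => (σ.jc c).vars) := by
  induction t with
  | var u => simp [Tm.subst, Tm.vars, Tm.consts]
  | const c => simp [Tm.subst, Tm.vars, Tm.consts]
  | app s t ihs iht => ext w; simp [Tm.subst, Tm.vars, Tm.consts, ihs, iht]; aesop
  | plus s t ihs iht => ext w; simp [Tm.subst, Tm.vars, Tm.consts, ihs, iht]; aesop

lemma Tm.consts_subst (t : Tm) (σ : Subst) :
    (t.subst σ).consts = t.vars.biUnion (fun u => (σ.jv u).consts) ∪ t.consts.biUnion (fun c => (σ.jc c).consts) := by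
  induction t with
  | var u => simp [Tm.subst, Tm.vars, Tm.consts]
  | const c => simp [Tm.subst, Tm.vars, Tm.consts]
  | app s t ihs iht => ext w; simp [Tm.subst, Tm.vars, Tm.consts, ihs, iht]; aesop
  | plus s t ihs iht => ext w; simp [Tm.subst, Tm.vars, Tm.consts, ihs, iht]; aesop

lemma lt_sup_succ {s : Finset ℕ} {w : ℕ} (h : w ∈ s) : w < s.sup Nat.succ :=
  Nat.lt_of_succ_le (Finset.le_sup (f := Nat.succ) h)

lemma pForced_fresh {σ : Subst} {φ : Fm} {w : ℕ}
    (h : w ∈ (φ.fvarP.biUnion fun v => (σ.pv v).fvarP) ∪ (φ.pconsts.biUnion fun d => (σ.pc d).fvarP)) :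
    w < pForced σ φ := lt_sup_succ h

lemma jForced_fresh {σ : Subst} {φ : Fm} {w : ℕ}
    (h : w ∈ (φ.fvarP.biUnion fun v => (σ.pv v).fvarJ) ∪
         (φ.pconsts.biUnion fun d => (σ.pc d).fvarJ) ∪
         (φ.fvarJ.biUnion fun u => (σ.jv u).vars) ∪
         (φ.jconsts.biUnion fun c => (σ.jc c).vars)) :
    w < jForced σ φ := lt_sup_succ h

lemma pForced_not_pv {σ : Subst} {φ : Fm} {v : ℕ} (hv : v ∈ φ.fvarP) :
    pForced σ φ ∉ (σ.pv v).fvarP := fun h =>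
  lt_irrefl _ (pForced_fresh (Finset.mem_union_left _ (Finset.mem_biUnion.2 ⟨v, hv, h⟩)))

lemma pForced_not_pc {σ : Subst} {φ : Fm} {d : ℕ} (hd : d ∈ φ.pconsts) :
    pForced σ φ ∉ (σ.pc d).fvarP := fun h =>
  lt_irrefl _ (pForced_fresh (Finset.mem_union_right _ (Finset.mem_biUnion.2 ⟨d, hd, h⟩)))

lemma jForced_not_pv {σ : Subst} {φ : Fm} {v : ℕ} (hv : v ∈ φ.fvarP) :
    jForced σ φ ∉ (σ.pv v).fvarJ := fun h =>
  lt_irrefl _ (jForced_fresh (by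
    refine Finset.mem_union_left _ (Finset.mem_union_left _ (Finset.mem_union_left _ ?_))
    exact Finset.mem_biUnion.2 ⟨v, hv, h⟩))

lemma jForced_not_pc {σ : Subst} {φ : Fm} {d : ℕ} (hd : d ∈ φ.pconsts) :
    jForced σ φ ∉ (σ.pc d).fvarJ := fun h =>
  lt_irrefl _ (jForced_fresh (by
    refine Finset.mem_union_left _ (Finset.mem_union_left _ (Finset.mem_union_right _ ?_))
    exact Finset.mem_biUnion.2 ⟨d, hd, h⟩))

lemma jForced_not_jv {σ : Subst} {φ : Fm} {u : ℕ} (hu : u ∈ φ.fvarJ) :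
    jForced σ φ ∉ (σ.jv u).vars := fun h =>
  lt_irrefl _ (jForced_fresh (by
    refine Finset.mem_union_left _ (Finset.mem_union_right _ ?_)
    exact Finset.mem_biUnion.2 ⟨u, hu, h⟩))

lemma jForced_not_jc {σ : Subst} {φ : Fm} {c : ℕ} (hc : c ∈ φ.jconsts) :
    jForced σ φ ∉ (σ.jc c).vars := fun h =>
  lt_irrefl _ (jForced_fresh (by
    refine Finset.mem_union_right _ ?_
    exact Finset.mem_biUnion.2 ⟨c, hc, h⟩))

lemma Fm.subst_fAll (x : ℕ) (φ : Fm) (σ : Subst) :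
    (Fm.fAll x φ).subst σ =
      .fAll (pForced σ (.fAll x φ)) (φ.subst (σ.updP x (.pvar (pForced σ (.fAll x φ))))) := rfl

lemma Fm.subst_jAll (u : ℕ) (φ : Fm) (σ : Subst) :
    (Fm.jAll u φ).subst σ =
      .jAll (jForced σ (.jAll u φ)) (φ.subst (σ.updJ u (.var (jForced σ (.jAll u φ))))) := rfl

lemma biUnion_update_split {α : Type*} {s : Finset ℕ} {f : ℕ → α} {x : ℕ} {e : α} (g : α → Finset ℕ) :
    (s.biUnion fun v => g (Function.update f x e v)) =
      (s.erase x).biUnion (fun v => g (f v)) ∪ (if x ∈ s then g e else ∅) := by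
  ext w
  simp only [Finset.mem_biUnion, Finset.mem_union, Finset.mem_erase, Function.update_apply]
  constructor
  · rintro ⟨v, hv, hw⟩
    by_cases h : v = x
    · subst h; right; simpa [hv] using hw
    · exact Or.inl ⟨v, ⟨h, hv⟩, by simpa [h] using hw⟩
  · rintro (⟨v, ⟨h, hv⟩, hw⟩ | hw)
    · exact ⟨v, hv, by simpa [h] using hw⟩
    · by_cases h : x ∈ s
      · simp only [h, if_true] at hw
        exact ⟨x, h, by simpa using hw⟩
      · simp [h] at hw

lemma biUnion_update_erase {α : Type*} {s : Finset ℕ} {f : ℕ → α} {x : ℕ} (e : α) (g : α → Finset ℕ)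
    (hg : g e = ∅) :
    (s.biUnion fun v => g (Function.update f x e v)) = (s.erase x).biUnion (fun v => g (f v)) := by
  rw [biUnion_update_split g, hg]
  split <;> simp

lemma biUnion_union_eq (s t : Finset ℕ) (f : ℕ → Finset ℕ) :
    (s ∪ t).biUnion f = s.biUnion f ∪ t.biUnion f := by
  ext w
  simp only [Finset.mem_biUnion, Finset.mem_union]
  constructor
  · rintro ⟨v, hv | hv, hw⟩
    · exact Or.inl ⟨v, hv, hw⟩
    · exact Or.inr ⟨v, hv, hw⟩
  · rintro (⟨v, hv, hw⟩ | ⟨v, hv, hw⟩)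
    · exact ⟨v, Or.inl hv, hw⟩
    · exact ⟨v, Or.inr hv, hw⟩

lemma Fm.fvarP_subst (φ : Fm) (σ : Subst) :
    (φ.subst σ).fvarP =
      (φ.fvarP.biUnion fun v => (σ.pv v).fvarP) ∪ (φ.pconsts.biUnion fun d => (σ.pc d).fvarP) := by
  induction φ generalizing σ with
  | pvar x => simp [Fm.subst, Fm.fvarP, Fm.pconsts]
  | pconst d => simp [Fm.subst, Fm.fvarP, Fm.pconsts]
  | imp φ ψ ih1 ih2 =>
      simp only [Fm.subst, Fm.fvarP, Fm.pconsts, ih1, ih2, biUnion_union_eq]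
      ext w; simp only [Finset.mem_union]; tauto
  | neg φ ih => simp [Fm.subst, Fm.fvarP, Fm.pconsts, ih]
  | ideq φ ψ ih1 ih2 =>
      simp only [Fm.subst, Fm.fvarP, Fm.pconsts, ih1, ih2, biUnion_union_eq]
      ext w; simp only [Finset.mem_union]; tauto
  | ref φ ψ ih1 ih2 =>
      simp only [Fm.subst, Fm.fvarP, Fm.pconsts, ih1, ih2, biUnion_union_eq]
      ext w; simp only [Finset.mem_union]; tauto
  | teq s t => simp [Fm.subst, Fm.fvarP, Fm.pconsts]
  | tle s t => simp [Fm.subst, Fm.fvarP, Fm.pconsts]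
  | isTrue φ ih => simp [Fm.subst, Fm.fvarP, Fm.pconsts, ih]
  | isFalse φ ih => simp [Fm.subst, Fm.fvarP, Fm.pconsts, ih]
  | box φ ih => simp [Fm.subst, Fm.fvarP, Fm.pconsts, ih]
  | just φ t ih => simp [Fm.subst, Fm.fvarP, Fm.pconsts, ih]
  | fAll x body ih =>
      rw [Fm.subst_fAll]
      set y := pForced σ (.fAll x body) with hy
      simp only [Fm.fvarP, Fm.pconsts]
      rw [ih, Subst.updP_pv, Subst.updP_pc, biUnion_update_split Fm.fvarP]
      have hyA : y ∉ (body.fvarP.erase x).biUnion (fun v => (σ.pv v).fvarP) := by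
        intro hmem
        rcases Finset.mem_biUnion.1 hmem with ⟨v, hv, hw⟩
        exact pForced_not_pv (σ := σ) (φ := .fAll x body) (by simpa [Fm.fvarP] using hv) hw
      have hyB : y ∉ body.pconsts.biUnion (fun d => (σ.pc d).fvarP) := by
        intro hmem
        rcases Finset.mem_biUnion.1 hmem with ⟨d, hd, hw⟩
        exact pForced_not_pc (σ := σ) (φ := .fAll x body) (by simpa [Fm.pconsts] using hd) hw
      have h0 : (if x ∈ body.fvarP then (Fm.pvar y).fvarP else ∅).erase y = ∅ := by
        split <;> simp [Fm.fvarP]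
      rw [Finset.erase_union_distrib, Finset.erase_union_distrib,
          Finset.erase_eq_of_notMem hyA, Finset.erase_eq_of_notMem hyB, h0, Finset.union_empty]
  | jAll u body ih =>
      rw [Fm.subst_jAll]
      simp only [Fm.fvarP, Fm.pconsts]
      rw [ih]
      simp only [Subst.updJ_pv, Subst.updJ_pc]

lemma Fm.pconsts_subst (φ : Fm) (σ : Subst) :
    (φ.subst σ).pconsts =
      (φ.fvarP.biUnion fun v => (σ.pv v).pconsts) ∪ (φ.pconsts.biUnion fun d => (σ.pc d).pconsts) := by
  induction φ generalizing σ with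
  | pvar x => simp [Fm.subst, Fm.fvarP, Fm.pconsts]
  | pconst d => simp [Fm.subst, Fm.fvarP, Fm.pconsts]
  | imp φ ψ ih1 ih2 =>
      simp only [Fm.subst, Fm.fvarP, Fm.pconsts, ih1, ih2, biUnion_union_eq]
      ext w; simp only [Finset.mem_union]; tauto
  | neg φ ih => simp [Fm.subst, Fm.fvarP, Fm.pconsts, ih]
  | ideq φ ψ ih1 ih2 =>
      simp only [Fm.subst, Fm.fvarP, Fm.pconsts, ih1, ih2, biUnion_union_eq]
      ext w; simp only [Finset.mem_union]; tauto
  | ref φ ψ ih1 ih2 =>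
      simp only [Fm.subst, Fm.fvarP, Fm.pconsts, ih1, ih2, biUnion_union_eq]
      ext w; simp only [Finset.mem_union]; tauto
  | teq s t => simp [Fm.subst, Fm.fvarP, Fm.pconsts]
  | tle s t => simp [Fm.subst, Fm.fvarP, Fm.pconsts]
  | isTrue φ ih => simp [Fm.subst, Fm.fvarP, Fm.pconsts, ih]
  | isFalse φ ih => simp [Fm.subst, Fm.fvarP, Fm.pconsts, ih]
  | box φ ih => simp [Fm.subst, Fm.fvarP, Fm.pconsts, ih]
  | just φ t ih => simp [Fm.subst, Fm.fvarP, Fm.pconsts, ih]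
  | fAll x body ih =>
      rw [Fm.subst_fAll]
      set y := pForced σ (.fAll x body) with hy
      simp only [Fm.fvarP, Fm.pconsts]
      rw [ih, Subst.updP_pv, Subst.updP_pc, biUnion_update_erase (Fm.pvar y) Fm.pconsts rfl]
  | jAll u body ih =>
      rw [Fm.subst_jAll]
      simp only [Fm.fvarP, Fm.pconsts]
      rw [ih]
      simp only [Subst.updJ_pv, Subst.updJ_pc]

lemma Fm.fvarJ_subst (φ : Fm) (σ : Subst) :
    (φ.subst σ).fvarJ =
      (φ.fvarP.biUnion fun v => (σ.pv v).fvarJ) ∪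
      (φ.pconsts.biUnion fun d => (σ.pc d).fvarJ) ∪
      (φ.fvarJ.biUnion fun u => (σ.jv u).vars) ∪
      (φ.jconsts.biUnion fun c => (σ.jc c).vars) := by
  induction φ generalizing σ with
  | pvar x => simp [Fm.subst, Fm.fvarP, Fm.pconsts, Fm.fvarJ, Fm.jconsts]
  | pconst d => simp [Fm.subst, Fm.fvarP, Fm.pconsts, Fm.fvarJ, Fm.jconsts]
  | imp φ ψ ih1 ih2 =>
      simp only [Fm.subst, Fm.fvarP, Fm.pconsts, Fm.fvarJ, Fm.jconsts, ih1, ih2, biUnion_union_eq]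
      ext w; simp only [Finset.mem_union]; tauto
  | neg φ ih => simp [Fm.subst, Fm.fvarP, Fm.pconsts, Fm.fvarJ, Fm.jconsts, ih]
  | ideq φ ψ ih1 ih2 =>
      simp only [Fm.subst, Fm.fvarP, Fm.pconsts, Fm.fvarJ, Fm.jconsts, ih1, ih2, biUnion_union_eq]
      ext w; simp only [Finset.mem_union]; tauto
  | ref φ ψ ih1 ih2 =>
      simp only [Fm.subst, Fm.fvarP, Fm.pconsts, Fm.fvarJ, Fm.jconsts, ih1, ih2, biUnion_union_eq]
      ext w; simp only [Finset.mem_union]; tauto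
  | teq s t =>
      simp only [Fm.subst, Fm.fvarP, Fm.pconsts, Fm.fvarJ, Fm.jconsts, Tm.vars_subst,
        biUnion_union_eq, Finset.biUnion_empty, Finset.empty_union]
      ext w; simp only [Finset.mem_union]; tauto
  | tle s t =>
      simp only [Fm.subst, Fm.fvarP, Fm.pconsts, Fm.fvarJ, Fm.jconsts, Tm.vars_subst,
        biUnion_union_eq, Finset.biUnion_empty, Finset.empty_union]
      ext w; simp only [Finset.mem_union]; tauto
  | isTrue φ ih => simp [Fm.subst, Fm.fvarP, Fm.pconsts, Fm.fvarJ, Fm.jconsts, ih]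
  | isFalse φ ih => simp [Fm.subst, Fm.fvarP, Fm.pconsts, Fm.fvarJ, Fm.jconsts, ih]
  | box φ ih => simp [Fm.subst, Fm.fvarP, Fm.pconsts, Fm.fvarJ, Fm.jconsts, ih]
  | just φ t ih =>
      simp only [Fm.subst, Fm.fvarP, Fm.pconsts, Fm.fvarJ, Fm.jconsts, Tm.vars_subst, ih,
        biUnion_union_eq]
      ext w; simp only [Finset.mem_union]; tauto
  | fAll x body ih =>
      rw [Fm.subst_fAll]
      set y := pForced σ (.fAll x body) with hy
      simp only [Fm.fvarP, Fm.pconsts, Fm.fvarJ, Fm.jconsts]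
      rw [ih]
      simp only [Subst.updP_pv, Subst.updP_pc, Subst.updP_jv, Subst.updP_jc]
      rw [biUnion_update_erase (Fm.pvar y) Fm.fvarJ rfl]
  | jAll u body ih =>
      rw [Fm.subst_jAll]
      set y := jForced σ (.jAll u body) with hy
      simp only [Fm.fvarP, Fm.pconsts, Fm.fvarJ, Fm.jconsts]
      rw [ih]
      simp only [Subst.updJ_pv, Subst.updJ_pc, Subst.updJ_jv, Subst.updJ_jc]
      rw [biUnion_update_split Tm.vars]
      have hyA : y ∉ body.fvarP.biUnion (fun v => (σ.pv v).fvarJ) := by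
        intro hmem
        rcases Finset.mem_biUnion.1 hmem with ⟨v, hv, hw⟩
        exact jForced_not_pv (σ := σ) (φ := .jAll u body) (by simpa [Fm.fvarP] using hv) hw
      have hyB : y ∉ body.pconsts.biUnion (fun d => (σ.pc d).fvarJ) := by
        intro hmem
        rcases Finset.mem_biUnion.1 hmem with ⟨d, hd, hw⟩
        exact jForced_not_pc (σ := σ) (φ := .jAll u body) (by simpa [Fm.pconsts] using hd) hw
      have hyC : y ∉ (body.fvarJ.erase u).biUnion (fun u' => (σ.jv u').vars) := by
        intro hmem
        rcases Finset.mem_biUnion.1 hmem with ⟨u', hu', hw⟩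
        exact jForced_not_jv (σ := σ) (φ := .jAll u body) (by simpa [Fm.fvarJ] using hu') hw
      have hyD : y ∉ body.jconsts.biUnion (fun c => (σ.jc c).vars) := by
        intro hmem
        rcases Finset.mem_biUnion.1 hmem with ⟨c, hc, hw⟩
        exact jForced_not_jc (σ := σ) (φ := .jAll u body) (by simpa [Fm.jconsts] using hc) hw
      have h0 : (if u ∈ body.fvarJ then (Tm.var y).vars else ∅).erase y = ∅ := by
        split <;> simp [Tm.vars]
      rw [Finset.erase_union_distrib, Finset.erase_union_distrib, Finset.erase_union_distrib,
          Finset.erase_union_distrib,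
          Finset.erase_eq_of_notMem hyA, Finset.erase_eq_of_notMem hyB,
          Finset.erase_eq_of_notMem hyC, Finset.erase_eq_of_notMem hyD, h0, Finset.union_empty]

lemma Fm.jconsts_subst (φ : Fm) (σ : Subst) :
    (φ.subst σ).jconsts =
      (φ.fvarP.biUnion fun v => (σ.pv v).jconsts) ∪
      (φ.pconsts.biUnion fun d => (σ.pc d).jconsts) ∪
      (φ.fvarJ.biUnion fun u => (σ.jv u).consts) ∪
      (φ.jconsts.biUnion fun c => (σ.jc c).consts) := by
  induction φ generalizing σ with
  | pvar x => simp [Fm.subst, Fm.fvarP, Fm.pconsts, Fm.fvarJ, Fm.jconsts]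
  | pconst d => simp [Fm.subst, Fm.fvarP, Fm.pconsts, Fm.fvarJ, Fm.jconsts]
  | imp φ ψ ih1 ih2 =>
      simp only [Fm.subst, Fm.fvarP, Fm.pconsts, Fm.fvarJ, Fm.jconsts, ih1, ih2, biUnion_union_eq]
      ext w; simp only [Finset.mem_union]; tauto
  | neg φ ih => simp [Fm.subst, Fm.fvarP, Fm.pconsts, Fm.fvarJ, Fm.jconsts, ih]
  | ideq φ ψ ih1 ih2 =>
      simp only [Fm.subst, Fm.fvarP, Fm.pconsts, Fm.fvarJ, Fm.jconsts, ih1, ih2, biUnion_union_eq]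
      ext w; simp only [Finset.mem_union]; tauto
  | ref φ ψ ih1 ih2 =>
      simp only [Fm.subst, Fm.fvarP, Fm.pconsts, Fm.fvarJ, Fm.jconsts, ih1, ih2, biUnion_union_eq]
      ext w; simp only [Finset.mem_union]; tauto
  | teq s t =>
      simp only [Fm.subst, Fm.fvarP, Fm.pconsts, Fm.fvarJ, Fm.jconsts, Tm.consts_subst,
        biUnion_union_eq, Finset.biUnion_empty, Finset.empty_union]
      ext w; simp only [Finset.mem_union]; tauto
  | tle s t =>
      simp only [Fm.subst, Fm.fvarP, Fm.pconsts, Fm.fvarJ, Fm.jconsts, Tm.consts_subst,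
        biUnion_union_eq, Finset.biUnion_empty, Finset.empty_union]
      ext w; simp only [Finset.mem_union]; tauto
  | isTrue φ ih => simp [Fm.subst, Fm.fvarP, Fm.pconsts, Fm.fvarJ, Fm.jconsts, ih]
  | isFalse φ ih => simp [Fm.subst, Fm.fvarP, Fm.pconsts, Fm.fvarJ, Fm.jconsts, ih]
  | box φ ih => simp [Fm.subst, Fm.fvarP, Fm.pconsts, Fm.fvarJ, Fm.jconsts, ih]
  | just φ t ih =>
      simp only [Fm.subst, Fm.fvarP, Fm.pconsts, Fm.fvarJ, Fm.jconsts, Tm.consts_subst, ih,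
        biUnion_union_eq]
      ext w; simp only [Finset.mem_union]; tauto
  | fAll x body ih =>
      rw [Fm.subst_fAll]
      set y := pForced σ (.fAll x body) with hy
      simp only [Fm.fvarP, Fm.pconsts, Fm.fvarJ, Fm.jconsts]
      rw [ih]
      simp only [Subst.updP_pv, Subst.updP_pc, Subst.updP_jv, Subst.updP_jc]
      rw [biUnion_update_erase (Fm.pvar y) Fm.jconsts rfl]
  | jAll u body ih =>
      rw [Fm.subst_jAll]
      set y := jForced σ (.jAll u body) with hy
      simp only [Fm.fvarP, Fm.pconsts, Fm.fvarJ, Fm.jconsts]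
      rw [ih]
      simp only [Subst.updJ_pv, Subst.updJ_pc, Subst.updJ_jv, Subst.updJ_jc]
      rw [biUnion_update_erase (Tm.var y) Tm.consts rfl]

lemma pForced_congr {σ σ' : Subst} {φ φ' : Fm}
    (h1 : φ.fvarP = φ'.fvarP) (h2 : φ.pconsts = φ'.pconsts)
    (hv : ∀ v ∈ φ.fvarP, (σ.pv v).fvarP = (σ'.pv v).fvarP)
    (hc : ∀ d ∈ φ.pconsts, (σ.pc d).fvarP = (σ'.pc d).fvarP) :
    pForced σ φ = pForced σ' φ' := by
  unfold pForced
  rw [Finset.biUnion_congr h1 hv, Finset.biUnion_congr h2 hc]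

lemma jForced_congr {σ σ' : Subst} {φ φ' : Fm}
    (h1 : φ.fvarP = φ'.fvarP) (h2 : φ.pconsts = φ'.pconsts)
    (h3 : φ.fvarJ = φ'.fvarJ) (h4 : φ.jconsts = φ'.jconsts)
    (hv : ∀ v ∈ φ.fvarP, (σ.pv v).fvarJ = (σ'.pv v).fvarJ)
    (hc : ∀ d ∈ φ.pconsts, (σ.pc d).fvarJ = (σ'.pc d).fvarJ)
    (hjv : ∀ u ∈ φ.fvarJ, (σ.jv u).vars = (σ'.jv u).vars)
    (hjc : ∀ c ∈ φ.jconsts, (σ.jc c).vars = (σ'.jc c).vars) :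
    jForced σ φ = jForced σ' φ' := by
  unfold jForced
  rw [Finset.biUnion_congr h1 hv, Finset.biUnion_congr h2 hc,
      Finset.biUnion_congr h3 hjv, Finset.biUnion_congr h4 hjc]

lemma Fm.subst_congr : ∀ {φ : Fm} {σ σ' : Subst},
    (∀ v ∈ φ.fvarP, σ.pv v = σ'.pv v) → (∀ d ∈ φ.pconsts, σ.pc d = σ'.pc d) →
    (∀ u ∈ φ.fvarJ, σ.jv u = σ'.jv u) → (∀ c ∈ φ.jconsts, σ.jc c = σ'.jc c) →
    φ.subst σ = φ.subst σ' := by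
  intro φ
  induction φ with
  | pvar x => intro σ σ' hpv _ _ _; exact hpv x (by simp [Fm.fvarP])
  | pconst d => intro σ σ' _ hpc _ _; exact hpc d (by simp [Fm.pconsts])
  | imp φ ψ ih1 ih2 =>
      intro σ σ' hpv hpc hjv hjc
      simp only [Fm.subst]
      rw [ih1 (fun v hv => hpv v (by simp [Fm.fvarP, hv])) (fun d hd => hpc d (by simp [Fm.pconsts, hd]))
            (fun u hu => hjv u (by simp [Fm.fvarJ, hu])) (fun c hc => hjc c (by simp [Fm.jconsts, hc])),
          ih2 (fun v hv => hpv v (by simp [Fm.fvarP, hv])) (fun d hd => hpc d (by simp [Fm.pconsts, hd]))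
            (fun u hu => hjv u (by simp [Fm.fvarJ, hu])) (fun c hc => hjc c (by simp [Fm.jconsts, hc]))]
  | neg φ ih =>
      intro σ σ' hpv hpc hjv hjc
      simp only [Fm.subst]
      rw [ih (fun v hv => hpv v hv) (fun d hd => hpc d hd) (fun u hu => hjv u hu) (fun c hc => hjc c hc)]
  | ideq φ ψ ih1 ih2 =>
      intro σ σ' hpv hpc hjv hjc
      simp only [Fm.subst]
      rw [ih1 (fun v hv => hpv v (by simp [Fm.fvarP, hv])) (fun d hd => hpc d (by simp [Fm.pconsts, hd]))
            (fun u hu => hjv u (by simp [Fm.fvarJ, hu])) (fun c hc => hjc c (by simp [Fm.jconsts, hc])),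
          ih2 (fun v hv => hpv v (by simp [Fm.fvarP, hv])) (fun d hd => hpc d (by simp [Fm.pconsts, hd]))
            (fun u hu => hjv u (by simp [Fm.fvarJ, hu])) (fun c hc => hjc c (by simp [Fm.jconsts, hc]))]
  | ref φ ψ ih1 ih2 =>
      intro σ σ' hpv hpc hjv hjc
      simp only [Fm.subst]
      rw [ih1 (fun v hv => hpv v (by simp [Fm.fvarP, hv])) (fun d hd => hpc d (by simp [Fm.pconsts, hd]))
            (fun u hu => hjv u (by simp [Fm.fvarJ, hu])) (fun c hc => hjc c (by simp [Fm.jconsts, hc])),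
          ih2 (fun v hv => hpv v (by simp [Fm.fvarP, hv])) (fun d hd => hpc d (by simp [Fm.pconsts, hd]))
            (fun u hu => hjv u (by simp [Fm.fvarJ, hu])) (fun c hc => hjc c (by simp [Fm.jconsts, hc]))]
  | teq s t =>
      intro σ σ' _ _ hjv hjc
      simp only [Fm.subst]
      rw [Tm.subst_congr (fun u hu => hjv u (by simp [Fm.fvarJ, hu])) (fun c hc => hjc c (by simp [Fm.jconsts, hc])),
          Tm.subst_congr (fun u hu => hjv u (by simp [Fm.fvarJ, hu])) (fun c hc => hjc c (by simp [Fm.jconsts, hc]))]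
  | tle s t =>
      intro σ σ' _ _ hjv hjc
      simp only [Fm.subst]
      rw [Tm.subst_congr (fun u hu => hjv u (by simp [Fm.fvarJ, hu])) (fun c hc => hjc c (by simp [Fm.jconsts, hc])),
          Tm.subst_congr (fun u hu => hjv u (by simp [Fm.fvarJ, hu])) (fun c hc => hjc c (by simp [Fm.jconsts, hc]))]
  | isTrue φ ih =>
      intro σ σ' hpv hpc hjv hjc
      simp only [Fm.subst]
      rw [ih hpv hpc hjv hjc]
  | isFalse φ ih =>
      intro σ σ' hpv hpc hjv hjc
      simp only [Fm.subst]
      rw [ih hpv hpc hjv hjc]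
  | box φ ih =>
      intro σ σ' hpv hpc hjv hjc
      simp only [Fm.subst]
      rw [ih hpv hpc hjv hjc]
  | just φ t ih =>
      intro σ σ' hpv hpc hjv hjc
      simp only [Fm.subst]
      rw [ih (fun v hv => hpv v hv) (fun d hd => hpc d hd)
            (fun u hu => hjv u (by simp [Fm.fvarJ, hu])) (fun c hc => hjc c (by simp [Fm.jconsts, hc])),
          Tm.subst_congr (fun u hu => hjv u (by simp [Fm.fvarJ, hu])) (fun c hc => hjc c (by simp [Fm.jconsts, hc]))]
  | fAll x body ih =>
      intro σ σ' hpv hpc hjv hjc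
      have hf : pForced σ (.fAll x body) = pForced σ' (.fAll x body) :=
        pForced_congr rfl rfl (fun v hv => by rw [hpv v hv]) (fun d hd => by rw [hpc d hd])
      rw [Fm.subst_fAll, Fm.subst_fAll, ← hf]
      congr 1
      refine ih ?_ hpc hjv hjc
      intro v hv
      by_cases h : v = x
      · subst h; simp [Function.update_apply]
      · simp only [Subst.updP_pv, Function.update_apply, if_neg h]
        exact hpv v (by simp [Fm.fvarP]; exact ⟨h, hv⟩)
  | jAll u body ih =>
      intro σ σ' hpv hpc hjv hjc
      have hf : jForced σ (.jAll u body) = jForced σ' (.jAll u body) :=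
        jForced_congr rfl rfl rfl rfl (fun v hv => by rw [hpv v hv]) (fun d hd => by rw [hpc d hd])
          (fun u' hu' => by rw [hjv u' hu']) (fun c hc => by rw [hjc c hc])
      rw [Fm.subst_jAll, Fm.subst_jAll, ← hf]
      congr 1
      refine ih hpv hpc ?_ hjc
      intro u' hu'
      by_cases h : u' = u
      · subst h; simp [Function.update_apply]
      · simp only [Subst.updJ_jv, Function.update_apply, if_neg h]
        exact hjv u' (by simp [Fm.fvarJ]; exact ⟨h, hu'⟩)

lemma Fm.subst_idLike_alpha : ∀ {φ : Fm} {σ : Subst},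
    (∀ v ∈ φ.fvarP, σ.pv v = .pvar v) → (∀ d ∈ φ.pconsts, σ.pc d = .pconst d) →
    (∀ u ∈ φ.fvarJ, σ.jv u = .var u) → (∀ c ∈ φ.jconsts, σ.jc c = .const c) →
    Alpha (φ.subst σ) φ := by
  intro φ
  induction φ with
  | pvar x =>
      intro σ hpv _ _ _
      rw [show (Fm.pvar x).subst σ = σ.pv x from rfl, hpv x (by simp [Fm.fvarP])]
      exact Alpha.refl _
  | pconst d =>
      intro σ _ hpc _ _
      rw [show (Fm.pconst d).subst σ = σ.pc d from rfl, hpc d (by simp [Fm.pconsts])]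
      exact Alpha.refl _
  | imp φ ψ ih1 ih2 =>
      intro σ hpv hpc hjv hjc
      exact Alpha.imp
        (ih1 (fun v hv => hpv v (by simp [Fm.fvarP, hv])) (fun d hd => hpc d (by simp [Fm.pconsts, hd]))
          (fun u hu => hjv u (by simp [Fm.fvarJ, hu])) (fun c hc => hjc c (by simp [Fm.jconsts, hc])))
        (ih2 (fun v hv => hpv v (by simp [Fm.fvarP, hv])) (fun d hd => hpc d (by simp [Fm.pconsts, hd]))
          (fun u hu => hjv u (by simp [Fm.fvarJ, hu])) (fun c hc => hjc c (by simp [Fm.jconsts, hc])))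
  | neg φ ih =>
      intro σ hpv hpc hjv hjc
      exact Alpha.neg (ih hpv hpc hjv hjc)
  | ideq φ ψ ih1 ih2 =>
      intro σ hpv hpc hjv hjc
      exact Alpha.ideq
        (ih1 (fun v hv => hpv v (by simp [Fm.fvarP, hv])) (fun d hd => hpc d (by simp [Fm.pconsts, hd]))
          (fun u hu => hjv u (by simp [Fm.fvarJ, hu])) (fun c hc => hjc c (by simp [Fm.jconsts, hc])))
        (ih2 (fun v hv => hpv v (by simp [Fm.fvarP, hv])) (fun d hd => hpc d (by simp [Fm.pconsts, hd]))
          (fun u hu => hjv u (by simp [Fm.fvarJ, hu])) (fun c hc => hjc c (by simp [Fm.jconsts, hc])))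
  | ref φ ψ ih1 ih2 =>
      intro σ hpv hpc hjv hjc
      exact Alpha.ref
        (ih1 (fun v hv => hpv v (by simp [Fm.fvarP, hv])) (fun d hd => hpc d (by simp [Fm.pconsts, hd]))
          (fun u hu => hjv u (by simp [Fm.fvarJ, hu])) (fun c hc => hjc c (by simp [Fm.jconsts, hc])))
        (ih2 (fun v hv => hpv v (by simp [Fm.fvarP, hv])) (fun d hd => hpc d (by simp [Fm.pconsts, hd]))
          (fun u hu => hjv u (by simp [Fm.fvarJ, hu])) (fun c hc => hjc c (by simp [Fm.jconsts, hc])))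
  | teq s t =>
      intro σ _ _ hjv hjc
      have h1 : s.subst σ = s := Tm.subst_id' (fun u hu => hjv u (by simp [Fm.fvarJ, hu])) (fun c hc => hjc c (by simp [Fm.jconsts, hc]))
      have h2 : t.subst σ = t := Tm.subst_id' (fun u hu => hjv u (by simp [Fm.fvarJ, hu])) (fun c hc => hjc c (by simp [Fm.jconsts, hc]))
      rw [show (Fm.teq s t).subst σ = .teq (s.subst σ) (t.subst σ) from rfl, h1, h2]
      exact Alpha.refl _
  | tle s t =>
      intro σ _ _ hjv hjc
      have h1 : s.subst σ = s := Tm.subst_id' (fun u hu => hjv u (by simp [Fm.fvarJ, hu])) (fun c hc => hjc c (by simp [Fm.jconsts, hc]))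
      have h2 : t.subst σ = t := Tm.subst_id' (fun u hu => hjv u (by simp [Fm.fvarJ, hu])) (fun c hc => hjc c (by simp [Fm.jconsts, hc]))
      rw [show (Fm.tle s t).subst σ = .tle (s.subst σ) (t.subst σ) from rfl, h1, h2]
      exact Alpha.refl _
  | isTrue φ ih => intro σ hpv hpc hjv hjc; exact Alpha.isTrue (ih hpv hpc hjv hjc)
  | isFalse φ ih => intro σ hpv hpc hjv hjc; exact Alpha.isFalse (ih hpv hpc hjv hjc)
  | box φ ih => intro σ hpv hpc hjv hjc; exact Alpha.box (ih hpv hpc hjv hjc)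
  | just φ t ih =>
      intro σ hpv hpc hjv hjc
      have h1 : t.subst σ = t := Tm.subst_id' (fun u hu => hjv u (by simp [Fm.fvarJ, hu])) (fun c hc => hjc c (by simp [Fm.jconsts, hc]))
      rw [show (Fm.just φ t).subst σ = .just (φ.subst σ) (t.subst σ) from rfl, h1]
      exact Alpha.just t (ih (fun v hv => hpv v hv) (fun d hd => hpc d hd)
        (fun u hu => hjv u (by simp [Fm.fvarJ, hu])) (fun c hc => hjc c (by simp [Fm.jconsts, hc])))
  | fAll x body ih =>
      intro σ hpv hpc hjv hjc
      rw [Fm.subst_fAll]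
      set y := pForced σ (.fAll x body) with hy
      refine Alpha.fAll ?_ ?_
      · have he : body.subst (σ.updP x (.pvar y)) = body.subst (Subst.id.updP x (.pvar y)) := by
          refine Fm.subst_congr ?_ ?_ ?_ ?_
          · intro v hv
            by_cases h : v = x
            · subst h; simp [Function.update_apply]
            · simp only [Subst.updP_pv, Function.update_apply, if_neg h, Subst.id_pv]
              exact hpv v (by simp [Fm.fvarP]; exact ⟨h, hv⟩)
          · intro d hd; simpa using hpc d hd
          · intro u hu; simpa using hjv u hu
          · intro c hc; simpa using hjc c hc
        rw [show Fm.subst1P body x (.pvar y) = body.subst (Subst.id.updP x (.pvar y)) from rfl]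
        rw [he]
        exact Alpha.refl _
      · intro hne hmem
        have hm : y ∈ (Fm.fAll x body).fvarP := by simp [Fm.fvarP]; exact ⟨hne, hmem⟩
        have : y ∈ (σ.pv y).fvarP := by rw [hpv y hm]; simp [Fm.fvarP]
        exact pForced_not_pv (σ := σ) hm this
  | jAll u body ih =>
      intro σ hpv hpc hjv hjc
      rw [Fm.subst_jAll]
      set y := jForced σ (.jAll u body) with hy
      refine Alpha.jAll ?_ ?_
      · have he : body.subst (σ.updJ u (.var y)) = body.subst (Subst.id.updJ u (.var y)) := by
          refine Fm.subst_congr ?_ ?_ ?_ ?_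
          · intro v hv; simpa using hpv v hv
          · intro d hd; simpa using hpc d hd
          · intro u' hu'
            by_cases h : u' = u
            · subst h; simp [Function.update_apply]
            · simp only [Subst.updJ_jv, Function.update_apply, if_neg h, Subst.id_jv]
              exact hjv u' (by simp [Fm.fvarJ]; exact ⟨h, hu'⟩)
          · intro c hc; simpa using hjc c hc
        rw [show Fm.subst1J body u (.var y) = body.subst (Subst.id.updJ u (.var y)) from rfl]
        rw [he]
        exact Alpha.refl _
      · intro hne hmem
        have hm : y ∈ (Fm.jAll u body).fvarJ := by simp [Fm.fvarJ]; exact ⟨hne, hmem⟩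
        have : y ∈ (σ.jv y).vars := by rw [hjv y hm]; simp [Tm.vars]
        exact jForced_not_jv (σ := σ) hm this

lemma Fm.subst_id_alpha (φ : Fm) : Alpha (φ.subst Subst.id) φ :=
  Fm.subst_idLike_alpha (by simp) (by simp) (by simp) (by simp)

lemma Fm.subst1P_self (B : Fm) (x : ℕ) : B.subst1P x (.pvar x) = B.subst Subst.id :=
  Fm.subst_congr
    (fun v _ => by by_cases h : v = x <;> simp [Function.update_apply, h])
    (fun d _ => rfl) (fun u _ => rfl) (fun c _ => rfl)

lemma Fm.subst1J_self (B : Fm) (u : ℕ) : B.subst1J u (.var u) = B.subst Subst.id :=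
  Fm.subst_congr (fun v _ => rfl) (fun d _ => rfl)
    (fun u' _ => by by_cases h : u' = u <;> simp [Function.update_apply, h])
    (fun c _ => rfl)

lemma alpha_fAll_congr {x : ℕ} {A B : Fm} (h : Alpha A B) : Alpha (.fAll x A) (.fAll x B) := by
  refine Alpha.fAll (h.trans (Alpha.symm ?_)) (fun hne => absurd rfl hne)
  rw [Fm.subst1P_self]
  exact Fm.subst_id_alpha B

lemma alpha_jAll_congr {u : ℕ} {A B : Fm} (h : Alpha A B) : Alpha (.jAll u A) (.jAll u B) := by
  refine Alpha.jAll (h.trans (Alpha.symm ?_)) (fun hne => absurd rfl hne)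
  rw [Fm.subst1J_self]
  exact Fm.subst_id_alpha B

@[simp] lemma biUnion_empty_fun (s : Finset ℕ) : (s.biUnion fun _ => (∅ : Finset ℕ)) = ∅ := by
  ext w; simp

lemma Fm.fvarP_subst1P_pvar (ψ : Fm) (y x : ℕ) :
    (ψ.subst1P y (.pvar x)).fvarP = (ψ.fvarP.erase y) ∪ (if y ∈ ψ.fvarP then {x} else ∅) := by
  rw [show ψ.subst1P y (.pvar x) = ψ.subst (Subst.id.updP y (.pvar x)) from rfl]
  rw [Fm.fvarP_subst, Subst.updP_pv, Subst.id_pv, Subst.updP_pc, Subst.id_pc,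
      biUnion_update_split Fm.fvarP]
  simp [Fm.fvarP, Fm.pconsts, Fm.fvarJ, Fm.jconsts, Tm.vars, Tm.consts, biUnion_empty_fun, Finset.biUnion_singleton_eq_self]

lemma Fm.pconsts_subst1P_pvar (ψ : Fm) (y x : ℕ) :
    (ψ.subst1P y (.pvar x)).pconsts = ψ.pconsts := by
  rw [show ψ.subst1P y (.pvar x) = ψ.subst (Subst.id.updP y (.pvar x)) from rfl]
  rw [Fm.pconsts_subst, Subst.updP_pv, Subst.id_pv, Subst.updP_pc, Subst.id_pc,
      biUnion_update_split Fm.pconsts]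
  simp [Fm.fvarP, Fm.pconsts, Fm.fvarJ, Fm.jconsts, Tm.vars, Tm.consts, biUnion_empty_fun, Finset.biUnion_singleton_eq_self]

lemma Fm.fvarJ_subst1P_pvar (ψ : Fm) (y x : ℕ) :
    (ψ.subst1P y (.pvar x)).fvarJ = ψ.fvarJ := by
  rw [show ψ.subst1P y (.pvar x) = ψ.subst (Subst.id.updP y (.pvar x)) from rfl]
  rw [Fm.fvarJ_subst]
  simp only [Subst.updP_pv, Subst.id_pv, Subst.updP_pc, Subst.id_pc, Subst.updP_jv, Subst.id_jv,
    Subst.updP_jc, Subst.id_jc]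
  rw [biUnion_update_split Fm.fvarJ]
  simp [Fm.fvarP, Fm.pconsts, Fm.fvarJ, Fm.jconsts, Tm.vars, Tm.consts, biUnion_empty_fun, Finset.biUnion_singleton_eq_self]

lemma Fm.jconsts_subst1P_pvar (ψ : Fm) (y x : ℕ) :
    (ψ.subst1P y (.pvar x)).jconsts = ψ.jconsts := by
  rw [show ψ.subst1P y (.pvar x) = ψ.subst (Subst.id.updP y (.pvar x)) from rfl]
  rw [Fm.jconsts_subst]
  simp only [Subst.updP_pv, Subst.id_pv, Subst.updP_pc, Subst.id_pc, Subst.updP_jv, Subst.id_jv,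
    Subst.updP_jc, Subst.id_jc]
  rw [biUnion_update_split Fm.jconsts]
  simp [Fm.fvarP, Fm.pconsts, Fm.fvarJ, Fm.jconsts, Tm.vars, Tm.consts, biUnion_empty_fun, Finset.biUnion_singleton_eq_self]

lemma Fm.fvarJ_subst1J_var (ψ : Fm) (v u : ℕ) :
    (ψ.subst1J v (.var u)).fvarJ = (ψ.fvarJ.erase v) ∪ (if v ∈ ψ.fvarJ then {u} else ∅) := by
  rw [show ψ.subst1J v (.var u) = ψ.subst (Subst.id.updJ v (.var u)) from rfl]
  rw [Fm.fvarJ_subst]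
  simp only [Subst.updJ_pv, Subst.id_pv, Subst.updJ_pc, Subst.id_pc, Subst.updJ_jv, Subst.id_jv,
    Subst.updJ_jc, Subst.id_jc]
  rw [biUnion_update_split Tm.vars]
  simp [Fm.fvarP, Fm.pconsts, Fm.fvarJ, Fm.jconsts, Tm.vars, Tm.consts, biUnion_empty_fun, Finset.biUnion_singleton_eq_self]

lemma Fm.fvarP_subst1J_var (ψ : Fm) (v u : ℕ) :
    (ψ.subst1J v (.var u)).fvarP = ψ.fvarP := by
  rw [show ψ.subst1J v (.var u) = ψ.subst (Subst.id.updJ v (.var u)) from rfl]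
  rw [Fm.fvarP_subst]
  simp [Fm.fvarP, Fm.pconsts, Fm.fvarJ, Fm.jconsts, Tm.vars, Tm.consts, biUnion_empty_fun, Finset.biUnion_singleton_eq_self]

lemma Fm.pconsts_subst1J_var (ψ : Fm) (v u : ℕ) :
    (ψ.subst1J v (.var u)).pconsts = ψ.pconsts := by
  rw [show ψ.subst1J v (.var u) = ψ.subst (Subst.id.updJ v (.var u)) from rfl]
  rw [Fm.pconsts_subst]
  simp [Fm.fvarP, Fm.pconsts, Fm.fvarJ, Fm.jconsts, Tm.vars, Tm.consts, biUnion_empty_fun, Finset.biUnion_singleton_eq_self]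

lemma Fm.jconsts_subst1J_var (ψ : Fm) (v u : ℕ) :
    (ψ.subst1J v (.var u)).jconsts = ψ.jconsts := by
  rw [show ψ.subst1J v (.var u) = ψ.subst (Subst.id.updJ v (.var u)) from rfl]
  rw [Fm.jconsts_subst]
  simp only [Subst.updJ_pv, Subst.id_pv, Subst.updJ_pc, Subst.id_pc, Subst.updJ_jv, Subst.id_jv,
    Subst.updJ_jc, Subst.id_jc]
  rw [biUnion_update_split Tm.consts]
  simp [Fm.fvarP, Fm.pconsts, Fm.fvarJ, Fm.jconsts, Tm.vars, Tm.consts, biUnion_empty_fun, Finset.biUnion_singleton_eq_self]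

lemma Alpha.invariants {φ ψ : Fm} (h : Alpha φ ψ) :
    φ.fvarP = ψ.fvarP ∧ φ.pconsts = ψ.pconsts ∧ φ.fvarJ = ψ.fvarJ ∧ φ.jconsts = ψ.jconsts := by
  induction h with
  | refl φ => exact ⟨rfl, rfl, rfl, rfl⟩
  | symm _ ih => exact ⟨ih.1.symm, ih.2.1.symm, ih.2.2.1.symm, ih.2.2.2.symm⟩
  | trans _ _ ih1 ih2 =>
      exact ⟨ih1.1.trans ih2.1, ih1.2.1.trans ih2.2.1, ih1.2.2.1.trans ih2.2.2.1,
        ih1.2.2.2.trans ih2.2.2.2⟩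
  | imp _ _ ih1 ih2 =>
      exact ⟨by simp [Fm.fvarP, ih1.1, ih2.1], by simp [Fm.pconsts, ih1.2.1, ih2.2.1],
        by simp [Fm.fvarJ, ih1.2.2.1, ih2.2.2.1], by simp [Fm.jconsts, ih1.2.2.2, ih2.2.2.2]⟩
  | ideq _ _ ih1 ih2 =>
      exact ⟨by simp [Fm.fvarP, ih1.1, ih2.1], by simp [Fm.pconsts, ih1.2.1, ih2.2.1],
        by simp [Fm.fvarJ, ih1.2.2.1, ih2.2.2.1], by simp [Fm.jconsts, ih1.2.2.2, ih2.2.2.2]⟩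
  | ref _ _ ih1 ih2 =>
      exact ⟨by simp [Fm.fvarP, ih1.1, ih2.1], by simp [Fm.pconsts, ih1.2.1, ih2.2.1],
        by simp [Fm.fvarJ, ih1.2.2.1, ih2.2.2.1], by simp [Fm.jconsts, ih1.2.2.2, ih2.2.2.2]⟩
  | neg _ ih =>
      exact ⟨by simp [Fm.fvarP, ih.1], by simp [Fm.pconsts, ih.2.1],
        by simp [Fm.fvarJ, ih.2.2.1], by simp [Fm.jconsts, ih.2.2.2]⟩
  | isTrue _ ih =>
      exact ⟨by simp [Fm.fvarP, ih.1], by simp [Fm.pconsts, ih.2.1],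
        by simp [Fm.fvarJ, ih.2.2.1], by simp [Fm.jconsts, ih.2.2.2]⟩
  | isFalse _ ih =>
      exact ⟨by simp [Fm.fvarP, ih.1], by simp [Fm.pconsts, ih.2.1],
        by simp [Fm.fvarJ, ih.2.2.1], by simp [Fm.jconsts, ih.2.2.2]⟩
  | box _ ih =>
      exact ⟨by simp [Fm.fvarP, ih.1], by simp [Fm.pconsts, ih.2.1],
        by simp [Fm.fvarJ, ih.2.2.1], by simp [Fm.jconsts, ih.2.2.2]⟩
  | just t _ ih =>
      exact ⟨by simp [Fm.fvarP, ih.1], by simp [Fm.pconsts, ih.2.1],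
        by simp [Fm.fvarJ, ih.2.2.1], by simp [Fm.jconsts, ih.2.2.2]⟩
  | @jAll φ₀ u v ψ₀ _ h2 ih =>
      obtain ⟨e1, e2, e3, e4⟩ := ih
      rw [Fm.fvarP_subst1J_var] at e1
      rw [Fm.pconsts_subst1J_var] at e2
      rw [Fm.fvarJ_subst1J_var] at e3
      rw [Fm.jconsts_subst1J_var] at e4
      refine ⟨by simp [Fm.fvarP, e1], by simp [Fm.pconsts, e2], ?_, by simp [Fm.jconsts, e4]⟩
      have hx' : u = v ∨ u ∉ ψ₀.fvarJ := by
        by_cases hxy : u = v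
        · exact Or.inl hxy
        · exact Or.inr (h2 hxy)
      simp only [Fm.fvarJ]
      by_cases hy : v ∈ ψ₀.fvarJ
      · simp only [hy, if_true] at e3
        ext w
        simp only [Finset.mem_erase, e3, Finset.mem_union, Finset.mem_singleton]
        constructor
        · rintro ⟨hwx, ⟨hwy, hw⟩ | rfl⟩
          · exact ⟨hwy, hw⟩
          · exact absurd rfl hwx
        · rintro ⟨hwy, hw⟩
          refine ⟨?_, Or.inl ⟨hwy, hw⟩⟩
          rcases hx' with rfl | hx
          · exact hwy
          · rintro rfl; exact hx hw
      · simp only [hy, if_false, Finset.union_empty] at e3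
        rw [e3]
        rcases hx' with rfl | hx
        · rw [Finset.erase_idem]
        · rw [Finset.erase_eq_of_notMem (fun hmem => hx (Finset.mem_of_mem_erase hmem))]
  | @fAll φ₀ x y ψ₀ _ h2 ih =>
      obtain ⟨e1, e2, e3, e4⟩ := ih
      rw [Fm.fvarP_subst1P_pvar] at e1
      rw [Fm.pconsts_subst1P_pvar] at e2
      rw [Fm.fvarJ_subst1P_pvar] at e3
      rw [Fm.jconsts_subst1P_pvar] at e4
      refine ⟨?_, by simp [Fm.pconsts, e2], by simp [Fm.fvarJ, e3], by simp [Fm.jconsts, e4]⟩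
      have hx' : x = y ∨ x ∉ ψ₀.fvarP := by
        by_cases hxy : x = y
        · exact Or.inl hxy
        · exact Or.inr (h2 hxy)
      simp only [Fm.fvarP]
      by_cases hy : y ∈ ψ₀.fvarP
      · simp only [hy, if_true] at e1
        ext w
        simp only [Finset.mem_erase, e1, Finset.mem_union, Finset.mem_singleton]
        constructor
        · rintro ⟨hwx, ⟨hwy, hw⟩ | rfl⟩
          · exact ⟨hwy, hw⟩
          · exact absurd rfl hwx
        · rintro ⟨hwy, hw⟩
          refine ⟨?_, Or.inl ⟨hwy, hw⟩⟩
          rcases hx' with rfl | hx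
          · exact hwy
          · rintro rfl; exact hx hw
      · simp only [hy, if_false, Finset.union_empty] at e1
        rw [e1]
        rcases hx' with rfl | hx
        · rw [Finset.erase_idem]
        · rw [Finset.erase_eq_of_notMem (fun hmem => hx (Finset.mem_of_mem_erase hmem))]

lemma Alpha.fvarP_eq {φ ψ : Fm} (h : Alpha φ ψ) : φ.fvarP = ψ.fvarP := h.invariants.1
lemma Alpha.pconsts_eq {φ ψ : Fm} (h : Alpha φ ψ) : φ.pconsts = ψ.pconsts := h.invariants.2.1
lemma Alpha.fvarJ_eq {φ ψ : Fm} (h : Alpha φ ψ) : φ.fvarJ = ψ.fvarJ := h.invariants.2.2.1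
lemma Alpha.jconsts_eq {φ ψ : Fm} (h : Alpha φ ψ) : φ.jconsts = ψ.jconsts := h.invariants.2.2.2

lemma sub_pv_fvarP {σ : Subst} {φ : Fm} {v : ℕ} (h : v ∈ φ.fvarP) :
    (σ.pv v).fvarP ⊆ (φ.subst σ).fvarP := by
  rw [Fm.fvarP_subst]; intro w hw
  exact Finset.mem_union_left _ (Finset.mem_biUnion.2 ⟨v, h, hw⟩)

lemma sub_pc_fvarP {σ : Subst} {φ : Fm} {d : ℕ} (h : d ∈ φ.pconsts) :
    (σ.pc d).fvarP ⊆ (φ.subst σ).fvarP := by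
  rw [Fm.fvarP_subst]; intro w hw
  exact Finset.mem_union_right _ (Finset.mem_biUnion.2 ⟨d, h, hw⟩)

lemma sub_pv_pconsts {σ : Subst} {φ : Fm} {v : ℕ} (h : v ∈ φ.fvarP) :
    (σ.pv v).pconsts ⊆ (φ.subst σ).pconsts := by
  rw [Fm.pconsts_subst]; intro w hw
  exact Finset.mem_union_left _ (Finset.mem_biUnion.2 ⟨v, h, hw⟩)

lemma sub_pc_pconsts {σ : Subst} {φ : Fm} {d : ℕ} (h : d ∈ φ.pconsts) :
    (σ.pc d).pconsts ⊆ (φ.subst σ).pconsts := by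
  rw [Fm.pconsts_subst]; intro w hw
  exact Finset.mem_union_right _ (Finset.mem_biUnion.2 ⟨d, h, hw⟩)

lemma sub_pv_fvarJ {σ : Subst} {φ : Fm} {v : ℕ} (h : v ∈ φ.fvarP) :
    (σ.pv v).fvarJ ⊆ (φ.subst σ).fvarJ := by
  rw [Fm.fvarJ_subst]; intro w hw
  exact Finset.mem_union_left _ (Finset.mem_union_left _ (Finset.mem_union_left _
    (Finset.mem_biUnion.2 ⟨v, h, hw⟩)))

lemma sub_pc_fvarJ {σ : Subst} {φ : Fm} {d : ℕ} (h : d ∈ φ.pconsts) :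
    (σ.pc d).fvarJ ⊆ (φ.subst σ).fvarJ := by
  rw [Fm.fvarJ_subst]; intro w hw
  exact Finset.mem_union_left _ (Finset.mem_union_left _ (Finset.mem_union_right _
    (Finset.mem_biUnion.2 ⟨d, h, hw⟩)))

lemma sub_jv_fvarJ {σ : Subst} {φ : Fm} {u : ℕ} (h : u ∈ φ.fvarJ) :
    (σ.jv u).vars ⊆ (φ.subst σ).fvarJ := by
  rw [Fm.fvarJ_subst]; intro w hw
  exact Finset.mem_union_left _ (Finset.mem_union_right _ (Finset.mem_biUnion.2 ⟨u, h, hw⟩))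

lemma sub_jc_fvarJ {σ : Subst} {φ : Fm} {c : ℕ} (h : c ∈ φ.jconsts) :
    (σ.jc c).vars ⊆ (φ.subst σ).fvarJ := by
  rw [Fm.fvarJ_subst]; intro w hw
  exact Finset.mem_union_right _ (Finset.mem_biUnion.2 ⟨c, h, hw⟩)

lemma sub_pv_jconsts {σ : Subst} {φ : Fm} {v : ℕ} (h : v ∈ φ.fvarP) :
    (σ.pv v).jconsts ⊆ (φ.subst σ).jconsts := by
  rw [Fm.jconsts_subst]; intro w hw
  exact Finset.mem_union_left _ (Finset.mem_union_left _ (Finset.mem_union_left _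
    (Finset.mem_biUnion.2 ⟨v, h, hw⟩)))

lemma sub_pc_jconsts {σ : Subst} {φ : Fm} {d : ℕ} (h : d ∈ φ.pconsts) :
    (σ.pc d).jconsts ⊆ (φ.subst σ).jconsts := by
  rw [Fm.jconsts_subst]; intro w hw
  exact Finset.mem_union_left _ (Finset.mem_union_left _ (Finset.mem_union_right _
    (Finset.mem_biUnion.2 ⟨d, h, hw⟩)))

lemma sub_jv_jconsts {σ : Subst} {φ : Fm} {u : ℕ} (h : u ∈ φ.fvarJ) :
    (σ.jv u).consts ⊆ (φ.subst σ).jconsts := by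
  rw [Fm.jconsts_subst]; intro w hw
  exact Finset.mem_union_left _ (Finset.mem_union_right _ (Finset.mem_biUnion.2 ⟨u, h, hw⟩))

lemma sub_jc_jconsts {σ : Subst} {φ : Fm} {c : ℕ} (h : c ∈ φ.jconsts) :
    (σ.jc c).consts ⊆ (φ.subst σ).jconsts := by
  rw [Fm.jconsts_subst]; intro w hw
  exact Finset.mem_union_right _ (Finset.mem_biUnion.2 ⟨c, h, hw⟩)

lemma Fm.subst_alpha_congr : ∀ {φ : Fm} {σ σ' : Subst},
    (∀ v ∈ φ.fvarP, Alpha (σ.pv v) (σ'.pv v)) → (∀ d ∈ φ.pconsts, Alpha (σ.pc d) (σ'.pc d)) →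
    (∀ u ∈ φ.fvarJ, σ.jv u = σ'.jv u) → (∀ c ∈ φ.jconsts, σ.jc c = σ'.jc c) →
    Alpha (φ.subst σ) (φ.subst σ') := by
  intro φ
  induction φ with
  | pvar x => intro σ σ' hpv _ _ _; exact hpv x (by simp [Fm.fvarP])
  | pconst d => intro σ σ' _ hpc _ _; exact hpc d (by simp [Fm.pconsts])
  | imp φ ψ ih1 ih2 =>
      intro σ σ' hpv hpc hjv hjc
      exact Alpha.imp
        (ih1 (fun v hv => hpv v (by simp [Fm.fvarP, hv])) (fun d hd => hpc d (by simp [Fm.pconsts, hd]))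
          (fun u hu => hjv u (by simp [Fm.fvarJ, hu])) (fun c hc => hjc c (by simp [Fm.jconsts, hc])))
        (ih2 (fun v hv => hpv v (by simp [Fm.fvarP, hv])) (fun d hd => hpc d (by simp [Fm.pconsts, hd]))
          (fun u hu => hjv u (by simp [Fm.fvarJ, hu])) (fun c hc => hjc c (by simp [Fm.jconsts, hc])))
  | neg φ ih => intro σ σ' hpv hpc hjv hjc; exact Alpha.neg (ih hpv hpc hjv hjc)
  | ideq φ ψ ih1 ih2 =>
      intro σ σ' hpv hpc hjv hjc
      exact Alpha.ideq
        (ih1 (fun v hv => hpv v (by simp [Fm.fvarP, hv])) (fun d hd => hpc d (by simp [Fm.pconsts, hd]))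
          (fun u hu => hjv u (by simp [Fm.fvarJ, hu])) (fun c hc => hjc c (by simp [Fm.jconsts, hc])))
        (ih2 (fun v hv => hpv v (by simp [Fm.fvarP, hv])) (fun d hd => hpc d (by simp [Fm.pconsts, hd]))
          (fun u hu => hjv u (by simp [Fm.fvarJ, hu])) (fun c hc => hjc c (by simp [Fm.jconsts, hc])))
  | ref φ ψ ih1 ih2 =>
      intro σ σ' hpv hpc hjv hjc
      exact Alpha.ref
        (ih1 (fun v hv => hpv v (by simp [Fm.fvarP, hv])) (fun d hd => hpc d (by simp [Fm.pconsts, hd]))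
          (fun u hu => hjv u (by simp [Fm.fvarJ, hu])) (fun c hc => hjc c (by simp [Fm.jconsts, hc])))
        (ih2 (fun v hv => hpv v (by simp [Fm.fvarP, hv])) (fun d hd => hpc d (by simp [Fm.pconsts, hd]))
          (fun u hu => hjv u (by simp [Fm.fvarJ, hu])) (fun c hc => hjc c (by simp [Fm.jconsts, hc])))
  | teq s t =>
      intro σ σ' _ _ hjv hjc
      have h1 : s.subst σ = s.subst σ' := Tm.subst_congr (fun u hu => hjv u (by simp [Fm.fvarJ, hu])) (fun c hc => hjc c (by simp [Fm.jconsts, hc]))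
      have h2 : t.subst σ = t.subst σ' := Tm.subst_congr (fun u hu => hjv u (by simp [Fm.fvarJ, hu])) (fun c hc => hjc c (by simp [Fm.jconsts, hc]))
      rw [show (Fm.teq s t).subst σ = .teq (s.subst σ) (t.subst σ) from rfl, h1, h2]
      exact Alpha.refl _
  | tle s t =>
      intro σ σ' _ _ hjv hjc
      have h1 : s.subst σ = s.subst σ' := Tm.subst_congr (fun u hu => hjv u (by simp [Fm.fvarJ, hu])) (fun c hc => hjc c (by simp [Fm.jconsts, hc]))
      have h2 : t.subst σ = t.subst σ' := Tm.subst_congr (fun u hu => hjv u (by simp [Fm.fvarJ, hu])) (fun c hc => hjc c (by simp [Fm.jconsts, hc]))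
      rw [show (Fm.tle s t).subst σ = .tle (s.subst σ) (t.subst σ) from rfl, h1, h2]
      exact Alpha.refl _
  | isTrue φ ih => intro σ σ' hpv hpc hjv hjc; exact Alpha.isTrue (ih hpv hpc hjv hjc)
  | isFalse φ ih => intro σ σ' hpv hpc hjv hjc; exact Alpha.isFalse (ih hpv hpc hjv hjc)
  | box φ ih => intro σ σ' hpv hpc hjv hjc; exact Alpha.box (ih hpv hpc hjv hjc)
  | just φ t ih =>
      intro σ σ' hpv hpc hjv hjc
      have h1 : t.subst σ = t.subst σ' := Tm.subst_congr (fun u hu => hjv u (by simp [Fm.fvarJ, hu])) (fun c hc => hjc c (by simp [Fm.jconsts, hc]))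
      rw [show (Fm.just φ t).subst σ = .just (φ.subst σ) (t.subst σ) from rfl, h1,
          show (Fm.just φ t).subst σ' = .just (φ.subst σ') (t.subst σ') from rfl]
      exact Alpha.just _ (ih (fun v hv => hpv v hv) (fun d hd => hpc d hd)
        (fun u hu => hjv u (by simp [Fm.fvarJ, hu])) (fun c hc => hjc c (by simp [Fm.jconsts, hc])))
  | fAll x body ih =>
      intro σ σ' hpv hpc hjv hjc
      have hf : pForced σ (.fAll x body) = pForced σ' (.fAll x body) := by
        refine pForced_congr rfl rfl ?_ ?_
        · intro v hv; exact (hpv v hv).fvarP_eq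
        · intro d hd; exact (hpc d hd).fvarP_eq
      rw [Fm.subst_fAll, Fm.subst_fAll, ← hf]
      refine alpha_fAll_congr (ih ?_ ?_ ?_ ?_)
      · intro v hv
        by_cases h : v = x
        · subst h; simp only [Subst.updP_pv, Function.update_self]; exact Alpha.refl _
        · simp only [Subst.updP_pv, Function.update_apply, if_neg h]
          exact hpv v (by simp [Fm.fvarP]; exact ⟨h, hv⟩)
      · intro d hd; simpa using hpc d hd
      · intro u hu; simpa using hjv u hu
      · intro c hc; simpa using hjc c hc
  | jAll u body ih =>
      intro σ σ' hpv hpc hjv hjc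
      have hf : jForced σ (.jAll u body) = jForced σ' (.jAll u body) := by
        refine jForced_congr rfl rfl rfl rfl ?_ ?_ ?_ ?_
        · intro v hv; exact (hpv v hv).fvarJ_eq
        · intro d hd; exact (hpc d hd).fvarJ_eq
        · intro u' hu'; rw [hjv u' hu']
        · intro c hc; rw [hjc c hc]
      rw [Fm.subst_jAll, Fm.subst_jAll, ← hf]
      refine alpha_jAll_congr (ih ?_ ?_ ?_ ?_)
      · intro v hv; simpa using hpv v hv
      · intro d hd; simpa using hpc d hd
      · intro u' hu'
        by_cases h : u' = u
        · subst h; simp only [Subst.updJ_jv, Function.update_self]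
        · simp only [Subst.updJ_jv, Function.update_apply, if_neg h]
          exact hjv u' (by simp [Fm.fvarJ]; exact ⟨h, hu'⟩)
      · intro c hc; simpa using hjc c hc

lemma Fm.subst_comp_alpha : ∀ (φ : Fm) (σ τ : Subst),
    Alpha ((φ.subst σ).subst τ) (φ.subst (σ.comp τ))
  | .pvar x, σ, τ => Alpha.refl _
  | .pconst d, σ, τ => Alpha.refl _
  | .imp φ ψ, σ, τ => Alpha.imp (Fm.subst_comp_alpha φ σ τ) (Fm.subst_comp_alpha ψ σ τ)
  | .neg φ, σ, τ => Alpha.neg (Fm.subst_comp_alpha φ σ τ)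
  | .ideq φ ψ, σ, τ => Alpha.ideq (Fm.subst_comp_alpha φ σ τ) (Fm.subst_comp_alpha ψ σ τ)
  | .ref φ ψ, σ, τ => Alpha.ref (Fm.subst_comp_alpha φ σ τ) (Fm.subst_comp_alpha ψ σ τ)
  | .teq s t, σ, τ => by
      rw [show ((Fm.teq s t).subst σ).subst τ = .teq ((s.subst σ).subst τ) ((t.subst σ).subst τ) from rfl,
          Tm.subst_comp, Tm.subst_comp]
      exact Alpha.refl _
  | .tle s t, σ, τ => by
      rw [show ((Fm.tle s t).subst σ).subst τ = .tle ((s.subst σ).subst τ) ((t.subst σ).subst τ) from rfl,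
          Tm.subst_comp, Tm.subst_comp]
      exact Alpha.refl _
  | .isTrue φ, σ, τ => Alpha.isTrue (Fm.subst_comp_alpha φ σ τ)
  | .isFalse φ, σ, τ => Alpha.isFalse (Fm.subst_comp_alpha φ σ τ)
  | .box φ, σ, τ => Alpha.box (Fm.subst_comp_alpha φ σ τ)
  | .just φ t, σ, τ => by
      rw [show ((Fm.just φ t).subst σ).subst τ = .just ((φ.subst σ).subst τ) ((t.subst σ).subst τ) from rfl,
          Tm.subst_comp]
      exact Alpha.just _ (Fm.subst_comp_alpha φ σ τ)
  | .fAll x body, σ, τ => by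
      simp only [Fm.subst_fAll]
      set Y := pForced σ (.fAll x body) with hY
      set B := body.subst (σ.updP x (.pvar Y)) with hB
      set Z := pForced τ (.fAll Y B) with hZ
      set W := pForced (σ.comp τ) (.fAll x body) with hW
      have hyv : ∀ v ∈ body.fvarP, v ≠ x → Y ∉ (σ.pv v).fvarP := fun v hv hne =>
        pForced_not_pv (σ := σ) (φ := .fAll x body) (by simp [Fm.fvarP]; exact ⟨hne, hv⟩)
      have hyc : ∀ d ∈ body.pconsts, Y ∉ (σ.pc d).fvarP := fun d hd =>
        pForced_not_pc (σ := σ) (φ := .fAll x body) (by simpa [Fm.pconsts] using hd)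
      have hwv : ∀ v ∈ body.fvarP, v ≠ x → W ∉ ((σ.comp τ).pv v).fvarP := fun v hv hne =>
        pForced_not_pv (σ := σ.comp τ) (φ := .fAll x body) (by simp [Fm.fvarP]; exact ⟨hne, hv⟩)
      have hwc : ∀ d ∈ body.pconsts, W ∉ ((σ.comp τ).pc d).fvarP := fun d hd =>
        pForced_not_pc (σ := σ.comp τ) (φ := .fAll x body) (by simpa [Fm.pconsts] using hd)
      have hsubv : ∀ v ∈ body.fvarP, v ≠ x → (σ.pv v).fvarP ⊆ (Fm.fAll Y B).fvarP := by
        intro v hv hne w' hw'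
        have h1 : w' ∈ B.fvarP := by
          rw [hB]
          refine sub_pv_fvarP (σ := σ.updP x (.pvar Y)) hv ?_
          simpa only [Subst.updP_pv, Function.update_apply, if_neg hne] using hw'
        have h2 : w' ≠ Y := fun h => (hyv v hv hne) (h ▸ hw')
        simp only [Fm.fvarP, Finset.mem_erase]; exact ⟨h2, h1⟩
      have hsubc : ∀ d ∈ body.pconsts, (σ.pc d).fvarP ⊆ (Fm.fAll Y B).fvarP := by
        intro d hd w' hw'
        have h1 : w' ∈ B.fvarP := by
          rw [hB]; exact sub_pc_fvarP (σ := σ.updP x (.pvar Y)) hd hw'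
        have h2 : w' ≠ Y := fun h => (hyc d hd) (h ▸ hw')
        simp only [Fm.fvarP, Finset.mem_erase]; exact ⟨h2, h1⟩
      have hsubvc : ∀ v ∈ body.fvarP, v ≠ x → (σ.pv v).pconsts ⊆ (Fm.fAll Y B).pconsts := by
        intro v hv hne d' hd'
        show d' ∈ B.pconsts
        rw [hB]
        refine sub_pv_pconsts (σ := σ.updP x (.pvar Y)) hv ?_
        simpa only [Subst.updP_pv, Function.update_apply, if_neg hne] using hd'
      have hsubcc : ∀ d ∈ body.pconsts, (σ.pc d).pconsts ⊆ (Fm.fAll Y B).pconsts := by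
        intro d hd d' hd'
        show d' ∈ B.pconsts
        rw [hB]; exact sub_pc_pconsts (σ := σ.updP x (.pvar Y)) hd hd'
      have hzv : ∀ v ∈ body.fvarP, v ≠ x → Z ∉ ((σ.comp τ).pv v).fvarP := by
        intro v hv hne hmem
        rw [Subst.comp_pv, Fm.fvarP_subst] at hmem
        rcases Finset.mem_union.1 hmem with h | h
        · rcases Finset.mem_biUnion.1 h with ⟨v', hv', hz⟩
          exact pForced_not_pv (σ := τ) (φ := .fAll Y B) (hsubv v hv hne hv') hz
        · rcases Finset.mem_biUnion.1 h with ⟨d', hd', hz⟩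
          exact pForced_not_pc (σ := τ) (φ := .fAll Y B) (hsubvc v hv hne hd') hz
      have hzc : ∀ d ∈ body.pconsts, Z ∉ ((σ.comp τ).pc d).fvarP := by
        intro d hd hmem
        rw [Subst.comp_pc, Fm.fvarP_subst] at hmem
        rcases Finset.mem_union.1 hmem with h | h
        · rcases Finset.mem_biUnion.1 h with ⟨v', hv', hz⟩
          exact pForced_not_pv (σ := τ) (φ := .fAll Y B) (hsubc d hd hv') hz
        · rcases Finset.mem_biUnion.1 h with ⟨d', hd', hz⟩
          exact pForced_not_pc (σ := τ) (φ := .fAll Y B) (hsubcc d hd hd') hz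
      have step1 : Alpha (B.subst (τ.updP Y (.pvar Z)))
          (body.subst ((σ.updP x (.pvar Y)).comp (τ.updP Y (.pvar Z)))) := by
        rw [hB]; exact Fm.subst_comp_alpha body _ _
      have step2 : body.subst ((σ.updP x (.pvar Y)).comp (τ.updP Y (.pvar Z)))
          = body.subst ((σ.comp τ).updP x (.pvar Z)) := by
        refine Fm.subst_congr ?_ ?_ ?_ ?_
        · intro v hv
          by_cases h : v = x
          · subst h
            simp only [Subst.comp_pv, Subst.updP_pv, Function.update_self]
            rw [show (Fm.pvar Y).subst (τ.updP Y (.pvar Z)) = (τ.updP Y (.pvar Z)).pv Y from rfl]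
            simp only [Subst.updP_pv, Function.update_self]
          · simp only [Subst.comp_pv, Subst.updP_pv, Function.update_apply, if_neg h]
            refine Fm.subst_congr (fun v' hv' => ?_) (fun _ _ => rfl) (fun _ _ => rfl) (fun _ _ => rfl)
            simp only [Subst.updP_pv, Function.update_apply]
            rw [if_neg (fun he : v' = Y => hyv v hv h (he ▸ hv'))]
        · intro d hd
          simp only [Subst.comp_pc, Subst.updP_pc]
          refine Fm.subst_congr (fun v' hv' => ?_) (fun _ _ => rfl) (fun _ _ => rfl) (fun _ _ => rfl)
          simp only [Subst.updP_pv, Function.update_apply]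
          rw [if_neg (fun he : v' = Y => hyc d hd (he ▸ hv'))]
        · intro u hu
          simp only [Subst.comp_jv, Subst.updP_jv, Tm.subst_updP]
        · intro c hc
          simp only [Subst.comp_jc, Subst.updP_jc, Tm.subst_updP]
      have step12 : Alpha (B.subst (τ.updP Y (.pvar Z)))
          (body.subst ((σ.comp τ).updP x (.pvar Z))) := step2 ▸ step1
      by_cases hZW : Z = W
      · rw [← hZW]
        exact alpha_fAll_congr step12
      · refine (alpha_fAll_congr step12).trans (Alpha.fAll ?_ ?_)
        · have c1 : Alpha ((body.subst ((σ.comp τ).updP x (.pvar W))).subst (Subst.id.updP W (.pvar Z)))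
              (body.subst (((σ.comp τ).updP x (.pvar W)).comp (Subst.id.updP W (.pvar Z)))) :=
            Fm.subst_comp_alpha body _ _
          have c2 : Alpha (body.subst (((σ.comp τ).updP x (.pvar W)).comp (Subst.id.updP W (.pvar Z))))
              (body.subst ((σ.comp τ).updP x (.pvar Z))) := by
            refine Fm.subst_alpha_congr ?_ ?_ ?_ ?_
            · intro v hv
              by_cases h : v = x
              · subst h
                simp only [Subst.comp_pv, Subst.updP_pv, Function.update_self]
                rw [show (Fm.pvar W).subst (Subst.id.updP W (.pvar Z)) = (Subst.id.updP W (.pvar Z)).pv W from rfl]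
                simp only [Subst.updP_pv, Function.update_self, Subst.id_pv]
                exact Alpha.refl _
              · simp only [Subst.comp_pv, Subst.updP_pv, Function.update_apply, if_neg h]
                refine Fm.subst_idLike_alpha (fun v' hv' => ?_) (fun _ _ => rfl) (fun _ _ => rfl) (fun _ _ => rfl)
                simp only [Subst.updP_pv, Function.update_apply, Subst.id_pv]
                rw [if_neg (fun he : v' = W => hwv v hv h (he ▸ hv'))]
            · intro d hd
              simp only [Subst.comp_pc, Subst.updP_pc]
              refine Fm.subst_idLike_alpha (fun v' hv' => ?_) (fun _ _ => rfl) (fun _ _ => rfl) (fun _ _ => rfl)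
              simp only [Subst.updP_pv, Function.update_apply, Subst.id_pv]
              rw [if_neg (fun he : v' = W => hwc d hd (he ▸ hv'))]
            · intro u _
              simp only [Subst.comp_jv, Subst.updP_jv, Tm.subst_updP]
              exact Tm.subst_id' (by simp) (by simp)
            · intro c _
              simp only [Subst.comp_jc, Subst.updP_jc, Tm.subst_updP]
              exact Tm.subst_id' (by simp) (by simp)
          exact (c1.trans c2).symm
        · intro _ hmem
          rw [Fm.fvarP_subst] at hmem
          rcases Finset.mem_union.1 hmem with h | h
          · rcases Finset.mem_biUnion.1 h with ⟨v, hv, hz⟩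
            by_cases hvx : v = x
            · subst hvx
              simp only [Subst.updP_pv, Function.update_self, Fm.fvarP, Finset.mem_singleton] at hz
              exact hZW hz
            · simp only [Subst.updP_pv, Function.update_apply, if_neg hvx] at hz
              exact hzv v hv hvx hz
          · rcases Finset.mem_biUnion.1 h with ⟨d, hd, hz⟩
            simp only [Subst.updP_pc] at hz
            exact hzc d hd hz
  | .jAll u body, σ, τ => by
      simp only [Fm.subst_jAll]
      set Y := jForced σ (.jAll u body) with hY
      set B := body.subst (σ.updJ u (.var Y)) with hB
      set Z := jForced τ (.jAll Y B) with hZ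
      set W := jForced (σ.comp τ) (.jAll u body) with hW
      have hyv : ∀ v ∈ body.fvarP, Y ∉ (σ.pv v).fvarJ := fun v hv =>
        jForced_not_pv (σ := σ) (φ := .jAll u body) (by simpa [Fm.fvarP] using hv)
      have hyc : ∀ d ∈ body.pconsts, Y ∉ (σ.pc d).fvarJ := fun d hd =>
        jForced_not_pc (σ := σ) (φ := .jAll u body) (by simpa [Fm.pconsts] using hd)
      have hyjv : ∀ u' ∈ body.fvarJ, u' ≠ u → Y ∉ (σ.jv u').vars := fun u' hu' hne =>
        jForced_not_jv (σ := σ) (φ := .jAll u body) (by simp [Fm.fvarJ]; exact ⟨hne, hu'⟩)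
      have hyjc : ∀ c ∈ body.jconsts, Y ∉ (σ.jc c).vars := fun c hc =>
        jForced_not_jc (σ := σ) (φ := .jAll u body) (by simpa [Fm.jconsts] using hc)
      have hwv : ∀ v ∈ body.fvarP, W ∉ ((σ.comp τ).pv v).fvarJ := fun v hv =>
        jForced_not_pv (σ := σ.comp τ) (φ := .jAll u body) (by simpa [Fm.fvarP] using hv)
      have hwc : ∀ d ∈ body.pconsts, W ∉ ((σ.comp τ).pc d).fvarJ := fun d hd =>
        jForced_not_pc (σ := σ.comp τ) (φ := .jAll u body) (by simpa [Fm.pconsts] using hd)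
      have hwjv : ∀ u' ∈ body.fvarJ, u' ≠ u → W ∉ ((σ.comp τ).jv u').vars := fun u' hu' hne =>
        jForced_not_jv (σ := σ.comp τ) (φ := .jAll u body) (by simp [Fm.fvarJ]; exact ⟨hne, hu'⟩)
      have hwjc : ∀ c ∈ body.jconsts, W ∉ ((σ.comp τ).jc c).vars := fun c hc =>
        jForced_not_jc (σ := σ.comp τ) (φ := .jAll u body) (by simpa [Fm.jconsts] using hc)
      -- membership helpers into (jAll Y B)
      have memJ : ∀ {a : ℕ}, a ∈ B.fvarJ → a ≠ Y → a ∈ (Fm.jAll Y B).fvarJ := by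
        intro a h hne; simp only [Fm.fvarJ, Finset.mem_erase]; exact ⟨hne, h⟩
      have hsubPv : ∀ v ∈ body.fvarP, (σ.pv v).fvarP ⊆ (Fm.jAll Y B).fvarP := by
        intro v hv w' hw'
        show w' ∈ B.fvarP
        rw [hB]; exact sub_pv_fvarP (σ := σ.updJ u (.var Y)) hv hw'
      have hsubPc : ∀ d ∈ body.pconsts, (σ.pc d).fvarP ⊆ (Fm.jAll Y B).fvarP := by
        intro d hd w' hw'
        show w' ∈ B.fvarP
        rw [hB]; exact sub_pc_fvarP (σ := σ.updJ u (.var Y)) hd hw'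
      have hsubCv : ∀ v ∈ body.fvarP, (σ.pv v).pconsts ⊆ (Fm.jAll Y B).pconsts := by
        intro v hv w' hw'
        show w' ∈ B.pconsts
        rw [hB]; exact sub_pv_pconsts (σ := σ.updJ u (.var Y)) hv hw'
      have hsubCc : ∀ d ∈ body.pconsts, (σ.pc d).pconsts ⊆ (Fm.jAll Y B).pconsts := by
        intro d hd w' hw'
        show w' ∈ B.pconsts
        rw [hB]; exact sub_pc_pconsts (σ := σ.updJ u (.var Y)) hd hw'
      have hsubJv : ∀ v ∈ body.fvarP, (σ.pv v).fvarJ ⊆ (Fm.jAll Y B).fvarJ := by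
        intro v hv w' hw'
        refine memJ ?_ (fun h => (hyv v hv) (h ▸ hw'))
        rw [hB]; exact sub_pv_fvarJ (σ := σ.updJ u (.var Y)) hv hw'
      have hsubJc : ∀ d ∈ body.pconsts, (σ.pc d).fvarJ ⊆ (Fm.jAll Y B).fvarJ := by
        intro d hd w' hw'
        refine memJ ?_ (fun h => (hyc d hd) (h ▸ hw'))
        rw [hB]; exact sub_pc_fvarJ (σ := σ.updJ u (.var Y)) hd hw'
      have hsubJjv : ∀ u' ∈ body.fvarJ, u' ≠ u → (σ.jv u').vars ⊆ (Fm.jAll Y B).fvarJ := by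
        intro u' hu' hne w' hw'
        refine memJ ?_ (fun h => (hyjv u' hu' hne) (h ▸ hw'))
        rw [hB]
        refine sub_jv_fvarJ (σ := σ.updJ u (.var Y)) hu' ?_
        simpa only [Subst.updJ_jv, Function.update_apply, if_neg hne] using hw'
      have hsubJjc : ∀ c ∈ body.jconsts, (σ.jc c).vars ⊆ (Fm.jAll Y B).fvarJ := by
        intro c hc w' hw'
        refine memJ ?_ (fun h => (hyjc c hc) (h ▸ hw'))
        rw [hB]; exact sub_jc_fvarJ (σ := σ.updJ u (.var Y)) hc hw'
      have hsubKv : ∀ v ∈ body.fvarP, (σ.pv v).jconsts ⊆ (Fm.jAll Y B).jconsts := by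
        intro v hv w' hw'
        show w' ∈ B.jconsts
        rw [hB]; exact sub_pv_jconsts (σ := σ.updJ u (.var Y)) hv hw'
      have hsubKc : ∀ d ∈ body.pconsts, (σ.pc d).jconsts ⊆ (Fm.jAll Y B).jconsts := by
        intro d hd w' hw'
        show w' ∈ B.jconsts
        rw [hB]; exact sub_pc_jconsts (σ := σ.updJ u (.var Y)) hd hw'
      have hsubKjv : ∀ u' ∈ body.fvarJ, u' ≠ u → (σ.jv u').consts ⊆ (Fm.jAll Y B).jconsts := by
        intro u' hu' hne w' hw'
        show w' ∈ B.jconsts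
        rw [hB]
        refine sub_jv_jconsts (σ := σ.updJ u (.var Y)) hu' ?_
        simpa only [Subst.updJ_jv, Function.update_apply, if_neg hne] using hw'
      have hsubKjc : ∀ c ∈ body.jconsts, (σ.jc c).consts ⊆ (Fm.jAll Y B).jconsts := by
        intro c hc w' hw'
        show w' ∈ B.jconsts
        rw [hB]; exact sub_jc_jconsts (σ := σ.updJ u (.var Y)) hc hw'
      -- Z-freshness
      have fresh4 : ∀ (e : Fm), (e.fvarP ⊆ (Fm.jAll Y B).fvarP) → (e.pconsts ⊆ (Fm.jAll Y B).pconsts) →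
          (e.fvarJ ⊆ (Fm.jAll Y B).fvarJ) → (e.jconsts ⊆ (Fm.jAll Y B).jconsts) →
          Z ∉ (e.subst τ).fvarJ := by
        intro e h1 h2 h3 h4 hmem
        rw [Fm.fvarJ_subst] at hmem
        rcases Finset.mem_union.1 hmem with hmem | hc4
        · rcases Finset.mem_union.1 hmem with hmem | hc3
          · rcases Finset.mem_union.1 hmem with hc1 | hc2
            · rcases Finset.mem_biUnion.1 hc1 with ⟨v', hv', hz⟩
              exact jForced_not_pv (σ := τ) (φ := .jAll Y B) (h1 hv') hz
            · rcases Finset.mem_biUnion.1 hc2 with ⟨d', hd', hz⟩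
              exact jForced_not_pc (σ := τ) (φ := .jAll Y B) (h2 hd') hz
          · rcases Finset.mem_biUnion.1 hc3 with ⟨u'', hu'', hz⟩
            exact jForced_not_jv (σ := τ) (φ := .jAll Y B) (h3 hu'') hz
        · rcases Finset.mem_biUnion.1 hc4 with ⟨c', hc', hz⟩
          exact jForced_not_jc (σ := τ) (φ := .jAll Y B) (h4 hc') hz
      have fresh2 : ∀ (t : Tm), (t.vars ⊆ (Fm.jAll Y B).fvarJ) → (t.consts ⊆ (Fm.jAll Y B).jconsts) →
          Z ∉ (t.subst τ).vars := by
        intro t h1 h2 hmem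
        rw [Tm.vars_subst] at hmem
        rcases Finset.mem_union.1 hmem with h | h
        · rcases Finset.mem_biUnion.1 h with ⟨u'', hu'', hz⟩
          exact jForced_not_jv (σ := τ) (φ := .jAll Y B) (h1 hu'') hz
        · rcases Finset.mem_biUnion.1 h with ⟨c', hc', hz⟩
          exact jForced_not_jc (σ := τ) (φ := .jAll Y B) (h2 hc') hz
      have hzv : ∀ v ∈ body.fvarP, Z ∉ ((σ.comp τ).pv v).fvarJ := fun v hv =>
        fresh4 (σ.pv v) (hsubPv v hv) (hsubCv v hv) (hsubJv v hv) (hsubKv v hv)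
      have hzc : ∀ d ∈ body.pconsts, Z ∉ ((σ.comp τ).pc d).fvarJ := fun d hd =>
        fresh4 (σ.pc d) (hsubPc d hd) (hsubCc d hd) (hsubJc d hd) (hsubKc d hd)
      have hzjv : ∀ u' ∈ body.fvarJ, u' ≠ u → Z ∉ ((σ.comp τ).jv u').vars := fun u' hu' hne =>
        fresh2 (σ.jv u') (hsubJjv u' hu' hne) (hsubKjv u' hu' hne)
      have hzjc : ∀ c ∈ body.jconsts, Z ∉ ((σ.comp τ).jc c).vars := fun c hc =>
        fresh2 (σ.jc c) (hsubJjc c hc) (hsubKjc c hc)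
      -- step 1 and 2
      have step1 : Alpha (B.subst (τ.updJ Y (.var Z)))
          (body.subst ((σ.updJ u (.var Y)).comp (τ.updJ Y (.var Z)))) := by
        rw [hB]; exact Fm.subst_comp_alpha body _ _
      have step2 : body.subst ((σ.updJ u (.var Y)).comp (τ.updJ Y (.var Z)))
          = body.subst ((σ.comp τ).updJ u (.var Z)) := by
        refine Fm.subst_congr ?_ ?_ ?_ ?_
        · intro v hv
          simp only [Subst.comp_pv, Subst.updJ_pv]
          refine Fm.subst_congr (fun _ _ => rfl) (fun _ _ => rfl) (fun u' hu' => ?_) (fun _ _ => rfl)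
          simp only [Subst.updJ_jv, Function.update_apply]
          rw [if_neg (fun he : u' = Y => hyv v hv (he ▸ hu'))]
        · intro d hd
          simp only [Subst.comp_pc, Subst.updJ_pc]
          refine Fm.subst_congr (fun _ _ => rfl) (fun _ _ => rfl) (fun u' hu' => ?_) (fun _ _ => rfl)
          simp only [Subst.updJ_jv, Function.update_apply]
          rw [if_neg (fun he : u' = Y => hyc d hd (he ▸ hu'))]
        · intro u' hu'
          by_cases h : u' = u
          · subst h
            simp only [Subst.comp_jv, Subst.updJ_jv, Function.update_self]
            rw [show (Tm.var Y).subst (τ.updJ Y (.var Z)) = (τ.updJ Y (.var Z)).jv Y from rfl]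
            simp only [Subst.updJ_jv, Function.update_self]
          · simp only [Subst.comp_jv, Subst.updJ_jv, Function.update_apply, if_neg h]
            refine Tm.subst_congr (fun u'' hu'' => ?_) (fun _ _ => rfl)
            simp only [Subst.updJ_jv, Function.update_apply]
            rw [if_neg (fun he : u'' = Y => hyjv u' hu' h (he ▸ hu''))]
        · intro c hc
          simp only [Subst.comp_jc, Subst.updJ_jc]
          refine Tm.subst_congr (fun u'' hu'' => ?_) (fun _ _ => rfl)
          simp only [Subst.updJ_jv, Function.update_apply]
          rw [if_neg (fun he : u'' = Y => hyjc c hc (he ▸ hu''))]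
      have step12 : Alpha (B.subst (τ.updJ Y (.var Z)))
          (body.subst ((σ.comp τ).updJ u (.var Z))) := step2 ▸ step1
      by_cases hZW : Z = W
      · rw [← hZW]
        exact alpha_jAll_congr step12
      · refine (alpha_jAll_congr step12).trans (Alpha.jAll ?_ ?_)
        · have c1 : Alpha ((body.subst ((σ.comp τ).updJ u (.var W))).subst (Subst.id.updJ W (.var Z)))
              (body.subst (((σ.comp τ).updJ u (.var W)).comp (Subst.id.updJ W (.var Z)))) :=
            Fm.subst_comp_alpha body _ _
          have c2 : Alpha (body.subst (((σ.comp τ).updJ u (.var W)).comp (Subst.id.updJ W (.var Z))))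
              (body.subst ((σ.comp τ).updJ u (.var Z))) := by
            refine Fm.subst_alpha_congr ?_ ?_ ?_ ?_
            · intro v hv
              simp only [Subst.comp_pv, Subst.updJ_pv]
              refine Fm.subst_idLike_alpha (fun _ _ => rfl) (fun _ _ => rfl) (fun u' hu' => ?_) (fun _ _ => rfl)
              simp only [Subst.updJ_jv, Function.update_apply, Subst.id_jv]
              rw [if_neg (fun he : u' = W => hwv v hv (he ▸ hu'))]
            · intro d hd
              simp only [Subst.comp_pc, Subst.updJ_pc]
              refine Fm.subst_idLike_alpha (fun _ _ => rfl) (fun _ _ => rfl) (fun u' hu' => ?_) (fun _ _ => rfl)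
              simp only [Subst.updJ_jv, Function.update_apply, Subst.id_jv]
              rw [if_neg (fun he : u' = W => hwc d hd (he ▸ hu'))]
            · intro u' hu'
              by_cases h : u' = u
              · subst h
                simp only [Subst.comp_jv, Subst.updJ_jv, Function.update_self]
                rw [show (Tm.var W).subst (Subst.id.updJ W (.var Z)) = (Subst.id.updJ W (.var Z)).jv W from rfl]
                simp only [Subst.updJ_jv, Function.update_self, Subst.id_jv]
              · simp only [Subst.comp_jv, Subst.updJ_jv, Function.update_apply, if_neg h]
                refine Tm.subst_id' (fun u'' hu'' => ?_) (fun _ _ => rfl)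
                simp only [Subst.updJ_jv, Function.update_apply, Subst.id_jv]
                rw [if_neg (fun he : u'' = W => hwjv u' hu' h (he ▸ hu''))]
            · intro c hc
              simp only [Subst.comp_jc, Subst.updJ_jc]
              refine Tm.subst_id' (fun u'' hu'' => ?_) (fun _ _ => rfl)
              simp only [Subst.updJ_jv, Function.update_apply, Subst.id_jv]
              rw [if_neg (fun he : u'' = W => hwjc c hc (he ▸ hu''))]
          exact (c1.trans c2).symm
        · intro _ hmem
          rw [Fm.fvarJ_subst] at hmem
          rcases Finset.mem_union.1 hmem with hmem | hc4
          · rcases Finset.mem_union.1 hmem with hmem | hc3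
            · rcases Finset.mem_union.1 hmem with hc1 | hc2
              · rcases Finset.mem_biUnion.1 hc1 with ⟨v, hv, hz⟩
                simp only [Subst.updJ_pv] at hz
                exact hzv v hv hz
              · rcases Finset.mem_biUnion.1 hc2 with ⟨d, hd, hz⟩
                simp only [Subst.updJ_pc] at hz
                exact hzc d hd hz
            · rcases Finset.mem_biUnion.1 hc3 with ⟨u', hu', hz⟩
              by_cases hvx : u' = u
              · subst hvx
                simp only [Subst.updJ_jv, Function.update_self, Tm.vars, Finset.mem_singleton] at hz
                exact hZW hz
              · simp only [Subst.updJ_jv, Function.update_apply, if_neg hvx] at hz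
                exact hzjv u' hu' hvx hz
          · rcases Finset.mem_biUnion.1 hc4 with ⟨c, hc, hz⟩
            simp only [Subst.updJ_jc] at hz
            exact hzjc c hc hz

lemma Alpha.subst {φ ψ : Fm} (h : Alpha φ ψ) : ∀ σ : Subst, Alpha (φ.subst σ) (ψ.subst σ) := by
  induction h with
  | refl φ => intro σ; exact Alpha.refl _
  | symm _ ih => intro σ; exact (ih σ).symm
  | trans _ _ ih1 ih2 => intro σ; exact (ih1 σ).trans (ih2 σ)
  | imp _ _ ih1 ih2 => intro σ; exact Alpha.imp (ih1 σ) (ih2 σ)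
  | ideq _ _ ih1 ih2 => intro σ; exact Alpha.ideq (ih1 σ) (ih2 σ)
  | ref _ _ ih1 ih2 => intro σ; exact Alpha.ref (ih1 σ) (ih2 σ)
  | neg _ ih => intro σ; exact Alpha.neg (ih σ)
  | isTrue _ ih => intro σ; exact Alpha.isTrue (ih σ)
  | isFalse _ ih => intro σ; exact Alpha.isFalse (ih σ)
  | box _ ih => intro σ; exact Alpha.box (ih σ)
  | just t _ ih => intro σ; exact Alpha.just _ (ih σ)
  | @fAll φ₀ x y ψ₀ h1 h2 ih =>
      intro σ
      have hAl : Alpha (.fAll x φ₀) (.fAll y ψ₀) := Alpha.fAll h1 h2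
      have hf : pForced σ (.fAll x φ₀) = pForced σ (.fAll y ψ₀) :=
        pForced_congr hAl.fvarP_eq hAl.pconsts_eq (fun _ _ => rfl) (fun _ _ => rfl)
      rw [Fm.subst_fAll, Fm.subst_fAll, ← hf]
      set a := pForced σ (.fAll x φ₀) with ha
      refine alpha_fAll_congr ?_
      have hIH := ih (σ.updP x (.pvar a))
      have hcomp : Alpha ((ψ₀.subst1P y (.pvar x)).subst (σ.updP x (.pvar a)))
          (ψ₀.subst ((Subst.id.updP y (.pvar x)).comp (σ.updP x (.pvar a)))) := by
        rw [show ψ₀.subst1P y (.pvar x) = ψ₀.subst (Subst.id.updP y (.pvar x)) from rfl]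
        exact Fm.subst_comp_alpha ψ₀ _ _
      have heq : ψ₀.subst ((Subst.id.updP y (.pvar x)).comp (σ.updP x (.pvar a)))
          = ψ₀.subst (σ.updP y (.pvar a)) := by
        refine Fm.subst_congr ?_ (fun _ _ => rfl) (fun _ _ => rfl) (fun _ _ => rfl)
        intro v hv
        by_cases hvy : v = y
        · subst hvy
          simp only [Subst.comp_pv, Subst.updP_pv, Function.update_self, Subst.id_pv]
          rw [show (Fm.pvar x).subst (σ.updP x (.pvar a)) = (σ.updP x (.pvar a)).pv x from rfl]
          simp only [Subst.updP_pv, Function.update_self]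
        · have hvx : v ≠ x := by
            intro he
            by_cases hxy : x = y
            · exact hvy (he.trans hxy)
            · exact h2 hxy (he ▸ hv)
          simp only [Subst.comp_pv, Subst.updP_pv, Function.update_apply, if_neg hvy, Subst.id_pv]
          rw [show (Fm.pvar v).subst (σ.updP x (.pvar a)) = (σ.updP x (.pvar a)).pv v from rfl]
          simp only [Subst.updP_pv, Function.update_apply, if_neg hvx]
      exact hIH.trans (heq ▸ hcomp)
  | @jAll φ₀ u v ψ₀ h1 h2 ih =>
      intro σ
      have hAl : Alpha (.jAll u φ₀) (.jAll v ψ₀) := Alpha.jAll h1 h2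
      have hf : jForced σ (.jAll u φ₀) = jForced σ (.jAll v ψ₀) :=
        jForced_congr hAl.fvarP_eq hAl.pconsts_eq hAl.fvarJ_eq hAl.jconsts_eq
          (fun _ _ => rfl) (fun _ _ => rfl) (fun _ _ => rfl) (fun _ _ => rfl)
      rw [Fm.subst_jAll, Fm.subst_jAll, ← hf]
      set a := jForced σ (.jAll u φ₀) with ha
      refine alpha_jAll_congr ?_
      have hIH := ih (σ.updJ u (.var a))
      have hcomp : Alpha ((ψ₀.subst1J v (.var u)).subst (σ.updJ u (.var a)))
          (ψ₀.subst ((Subst.id.updJ v (.var u)).comp (σ.updJ u (.var a)))) := by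
        rw [show ψ₀.subst1J v (.var u) = ψ₀.subst (Subst.id.updJ v (.var u)) from rfl]
        exact Fm.subst_comp_alpha ψ₀ _ _
      have heq : ψ₀.subst ((Subst.id.updJ v (.var u)).comp (σ.updJ u (.var a)))
          = ψ₀.subst (σ.updJ v (.var a)) := by
        refine Fm.subst_congr (fun _ _ => rfl) (fun _ _ => rfl) ?_ (fun _ _ => rfl)
        intro u' hu'
        by_cases hvy : u' = v
        · subst hvy
          simp only [Subst.comp_jv, Subst.updJ_jv, Function.update_self, Subst.id_jv]
          rw [show (Tm.var u).subst (σ.updJ u (.var a)) = (σ.updJ u (.var a)).jv u from rfl]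
          simp only [Subst.updJ_jv, Function.update_self]
        · have hvx : u' ≠ u := by
            intro he
            by_cases hxy : u = v
            · exact hvy (he.trans hxy)
            · exact h2 hxy (he ▸ hu')
          simp only [Subst.comp_jv, Subst.updJ_jv, Function.update_apply, if_neg hvy, Subst.id_jv]
          rw [show (Tm.var u').subst (σ.updJ u (.var a)) = (σ.updJ u (.var a)).jv u' from rfl]
          simp only [Subst.updJ_jv, Function.update_apply, if_neg hvx]
      exact hIH.trans (heq ▸ hcomp)

lemma sref_subst_aux (φ ψ : Fm) (σ : Subst) (h : Sref φ ψ) :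
    Sref (φ.subst σ) (ψ.subst σ) := by
  obtain ⟨x, ψ', hne, hx, hα⟩ := h
  set z := pForced σ ψ' with hz
  set F := φ.subst σ with hF
  refine ⟨z, ψ'.subst (σ.updP x (.pvar z)), ?_, ?_, ?_⟩
  · cases hψ : ψ' with
    | pvar v =>
        subst hψ
        have hv : x = v := by simpa [Fm.fvarP] using hx
        exact absurd (congrArg Fm.pvar hv.symm) hne
    | pconst d => subst hψ; simp [Fm.pconsts, Fm.fvarP] at hx
    | imp a b => simp [Fm.subst]
    | neg a => simp [Fm.subst]
    | ideq a b => simp [Fm.subst]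
    | ref a b => simp [Fm.subst]
    | teq s t => simp [Fm.subst]
    | tle s t => simp [Fm.subst]
    | isTrue a => simp [Fm.subst]
    | isFalse a => simp [Fm.subst]
    | box a => simp [Fm.subst]
    | just a t => simp [Fm.subst]
    | fAll y a => simp [Fm.subst_fAll]
    | jAll y a => simp [Fm.subst_jAll]
  · refine sub_pv_fvarP (σ := σ.updP x (.pvar z)) hx ?_
    simp [Function.update_self, Fm.fvarP]
  · have c1 : Alpha ((ψ'.subst (σ.updP x (.pvar z))).subst (Subst.id.updP z F))
        (ψ'.subst ((σ.updP x (.pvar z)).comp (Subst.id.updP z F))) :=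
      Fm.subst_comp_alpha ψ' _ _
    have c2 : Alpha (ψ'.subst ((σ.updP x (.pvar z)).comp (Subst.id.updP z F)))
        (ψ'.subst ((Subst.id.updP x φ).comp σ)) := by
      refine Fm.subst_alpha_congr ?_ ?_ ?_ ?_
      · intro v hv
        by_cases h : v = x
        · subst h
          simp only [Subst.comp_pv, Subst.updP_pv, Function.update_self, Subst.id_pv]
          rw [show (Fm.pvar z).subst (Subst.id.updP z F) = (Subst.id.updP z F).pv z from rfl]
          simp only [Subst.updP_pv, Function.update_self, Subst.id_pv]
          exact Alpha.refl _
        · simp only [Subst.comp_pv, Subst.updP_pv, Function.update_apply, if_neg h, Subst.id_pv]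
          rw [show (Fm.pvar v).subst σ = σ.pv v from rfl]
          refine Fm.subst_idLike_alpha (fun v' hv' => ?_) (fun _ _ => rfl) (fun _ _ => rfl) (fun _ _ => rfl)
          simp only [Subst.updP_pv, Function.update_apply, Subst.id_pv]
          rw [if_neg (fun he : v' = z => pForced_not_pv (σ := σ) hv (by rw [← hz]; exact he ▸ hv'))]
      · intro d hd
        simp only [Subst.comp_pc, Subst.updP_pc, Subst.id_pc]
        rw [show (Fm.pconst d).subst σ = σ.pc d from rfl]
        refine Fm.subst_idLike_alpha (fun v' hv' => ?_) (fun _ _ => rfl) (fun _ _ => rfl) (fun _ _ => rfl)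
        simp only [Subst.updP_pv, Function.update_apply, Subst.id_pv]
        rw [if_neg (fun he : v' = z => pForced_not_pc (σ := σ) hd (by rw [← hz]; exact he ▸ hv'))]
      · intro u _
        simp only [Subst.comp_jv, Subst.updP_jv, Subst.id_jv]
        rw [show (Tm.var u).subst σ = σ.jv u from rfl]
        exact Tm.subst_id' (by simp) (by simp)
      · intro c _
        simp only [Subst.comp_jc, Subst.updP_jc, Subst.id_jc]
        rw [show (Tm.const c).subst σ = σ.jc c from rfl]
        exact Tm.subst_id' (by simp) (by simp)
    have c3 : Alpha (ψ'.subst ((Subst.id.updP x φ).comp σ))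
        ((ψ'.subst (Subst.id.updP x φ)).subst σ) := (Fm.subst_comp_alpha ψ' _ σ).symm
    have c4 : Alpha ((ψ'.subst1P x φ).subst σ) (ψ.subst σ) := hα.subst σ
    exact ((c1.trans c2).trans c3).trans c4

end EJ

/-- syntactical reference is preserved under substitution. -/
theorem sref_subst (φ ψ : EJ.Fm) (σ : EJ.Subst) (h : EJ.Sref φ ψ) :
    EJ.Sref (φ.subst σ) (ψ.subst σ) := by
  exact EJ.sref_subst_aux φ ψ σ h
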